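/- arXiv:2011.03954 — 5 statements merged into one kernel-verified Lean document; each statement's English description precedes it below -/
import Mathlib

section
/- Let X be a complete CAT(−1) metric space and ρ: Γ → Isom(X) a homomorphism. Assume that either ρ fixes a point of X, or the action of Γ on X via ρ is not evanescent (this holds in particular when ρ fixes no point of the boundary at infinity of X). Then there exists a harmonic ρ-equivariant map F: Ṽ → X, i.e. a ρ-equivariant map attaining the infimum of the energy E over all ρ-equivariant maps Ṽ → X. -/
open Real Set

noncomputable section

namespace DomCAT

/-! ### Model-plane comparison quantities -/

/-- Inverse hyperbolic cosine. -/
def arcosh (x : ℝ) : ℝ := Real.log (x + Real.sqrt (x ^ 2 - 1))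

/-- Cosine of the angle of the hyperbolic comparison triangle at the vertex between the
sides of lengths `b` and `c`, opposite to the side of length `a`
(hyperbolic law of cosines). -/
def hypAngleCos (a b c : ℝ) : ℝ :=
  (Real.cosh b * Real.cosh c - Real.cosh a) / (Real.sinh b * Real.sinh c)

/-- The comparison angle in `ℍ²` at the vertex between the sides of lengths `b`, `c`,
opposite to the side of length `a`. -/
def hypCompAngle (a b c : ℝ) : ℝ := Real.arccos (hypAngleCos a b c)

/-- Distance, in the hyperbolic comparison triangle with side lengths `a, b, c`
(`a` opposite to the base vertex), between the point at arclength `s` along the side of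
length `b` and the point at arclength `t` along the side of length `c`. -/
def hypCompDist (a b c s t : ℝ) : ℝ :=
  arcosh (Real.cosh s * Real.cosh t - Real.sinh s * Real.sinh t * hypAngleCos a b c)

/-- Spherical analogue of `hypAngleCos` (spherical law of cosines). -/
def sphAngleCos (a b c : ℝ) : ℝ :=
  (Real.cos a - Real.cos b * Real.cos c) / (Real.sin b * Real.sin c)

/-- Spherical analogue of `hypCompDist`, on the unit sphere. -/
def sphCompDist (a b c s t : ℝ) : ℝ :=
  Real.arccos (Real.cos s * Real.cos t + Real.sin s * Real.sin t * sphAngleCos a b c)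

/-- Cosine of the Euclidean comparison angle opposite to `a`, between sides `b`, `c`. -/
def eucAngleCos (a b c : ℝ) : ℝ := (b ^ 2 + c ^ 2 - a ^ 2) / (2 * b * c)

/-- Euclidean analogue of `hypCompDist`. -/
def eucCompDist (a b c s t : ℝ) : ℝ :=
  Real.sqrt (s ^ 2 + t ^ 2 - 2 * s * t * eucAngleCos a b c)

open Classical in
/-- Comparison distance in the model plane `M_κ` for `κ ∈ {-1, 0, 1}`. -/
def modelCompDist (κ a b c s t : ℝ) : ℝ :=
  if κ = 1 then sphCompDist a b c s t
  else if κ = 0 then eucCompDist a b c s t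
  else hypCompDist a b c s t

/-! ### Geodesics and CAT(κ) spaces -/

/-- `γ` is a unit-speed parametrization on `[0, dist x y]` of a geodesic from `x` to `y`. -/
def IsGeodesicParam {X : Type*} [MetricSpace X] (γ : ℝ → X) (x y : X) : Prop :=
  γ 0 = x ∧ γ (dist x y) = y ∧
    ∀ s ∈ Set.Icc (0 : ℝ) (dist x y), ∀ t ∈ Set.Icc (0 : ℝ) (dist x y),
      dist (γ s) (γ t) = |s - t|

/-- A geodesic metric space: any two points are joined by a geodesic. -/
def GeodesicSpace (X : Type*) [MetricSpace X] : Prop :=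
  ∀ x y : X, ∃ γ : ℝ → X, IsGeodesicParam γ x y

/-- `X` is a CAT(-1) space: it is geodesic and for every geodesic triangle the comparison
map from the comparison triangle in `ℍ²` is 1-Lipschitz (expressed via the hyperbolic
law of cosines, for pairs of points on two sides issuing from a common vertex). -/
def IsCATMinusOne (X : Type*) [MetricSpace X] : Prop :=
  GeodesicSpace X ∧
    ∀ (x y z : X) (γ₁ γ₂ : ℝ → X), IsGeodesicParam γ₁ x y → IsGeodesicParam γ₂ x z →
      ∀ s ∈ Set.Icc (0 : ℝ) (dist x y), ∀ t ∈ Set.Icc (0 : ℝ) (dist x z),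
        dist (γ₁ s) (γ₂ t) ≤ hypCompDist (dist y z) (dist x y) (dist x z) s t

/-- `X` is a CAT(1) space: it is `π`-geodesic and every geodesic triangle of perimeter
`< 2π` satisfies the comparison inequality with the unit sphere. -/
def IsCATOne (X : Type*) [MetricSpace X] : Prop :=
  (∀ x y : X, dist x y < π → ∃ γ : ℝ → X, IsGeodesicParam γ x y) ∧
    ∀ (x y z : X) (γ₁ γ₂ : ℝ → X), IsGeodesicParam γ₁ x y → IsGeodesicParam γ₂ x z →
      dist x y + dist y z + dist z x < 2 * π →
      ∀ s ∈ Set.Icc (0 : ℝ) (dist x y), ∀ t ∈ Set.Icc (0 : ℝ) (dist x z),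
        dist (γ₁ s) (γ₂ t) ≤ sphCompDist (dist y z) (dist x y) (dist x z) s t

/-- `X` is a CAT(κ) space, for `κ ∈ {-1, 0, 1}`. -/
def IsCATKappa (κ : ℝ) (X : Type*) [MetricSpace X] : Prop :=
  (∀ x y : X, (κ = 1 → dist x y < π) → ∃ γ : ℝ → X, IsGeodesicParam γ x y) ∧
    ∀ (x y z : X) (γ₁ γ₂ : ℝ → X), IsGeodesicParam γ₁ x y → IsGeodesicParam γ₂ x z →
      (κ = 1 → dist x y + dist y z + dist z x < 2 * π) →
      ∀ s ∈ Set.Icc (0 : ℝ) (dist x y), ∀ t ∈ Set.Icc (0 : ℝ) (dist x z),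
        dist (γ₁ s) (γ₂ t) ≤ modelCompDist κ (dist y z) (dist x y) (dist x z) s t

/-- `M` is (a copy of) the model plane `M_κ` of curvature `κ ∈ {-1,0,1}`: it is geodesic,
every geodesic triangle is isometric to its model comparison triangle, and every
admissible triple of side lengths is realized by some triangle. -/
structure IsModelPlane (κ : ℝ) (M : Type*) [MetricSpace M] : Prop where
  nonempty : Nonempty M
  geod : ∀ x y : M, (κ = 1 → dist x y < π) → ∃ γ : ℝ → M, IsGeodesicParam γ x y
  comp_eq : ∀ (x y z : M) (γ₁ γ₂ : ℝ → M), IsGeodesicParam γ₁ x y → IsGeodesicParam γ₂ x z →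
    (κ = 1 → dist x y + dist y z + dist z x < 2 * π) →
    ∀ s ∈ Set.Icc (0 : ℝ) (dist x y), ∀ t ∈ Set.Icc (0 : ℝ) (dist x z),
      dist (γ₁ s) (γ₂ t) = modelCompDist κ (dist y z) (dist x y) (dist x z) s t
  realize : ∀ a b c : ℝ, 0 ≤ a → 0 ≤ b → 0 ≤ c → a ≤ b + c → b ≤ a + c → c ≤ a + b →
    (κ = 1 → a + b + c < 2 * π) → ∃ x y z : M, dist y z = a ∧ dist x y = b ∧ dist x z = c

/-- The (metric) segment between `x` and `y`: in a uniquely geodesic space this is the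
geodesic `[xy]`. -/
def mSeg {X : Type*} [MetricSpace X] (x y : X) : Set X :=
  {p | dist x p + dist p y = dist x y}

/-- The solid triangle (convex hull of a geodesic triangle in a uniquely geodesic space)
with vertices `x`, `y`, `z`: the union of the segments from `x` to points of `[yz]`. -/
def mTriangle {X : Type*} [MetricSpace X] (x y z : X) : Set X :=
  ⋃ p ∈ mSeg y z, mSeg x p

/-- Metric convexity of a subset. -/
def MConvex {M : Type*} [MetricSpace M] (D : Set M) : Prop :=
  ∀ x ∈ D, ∀ y ∈ D, mSeg x y ⊆ D

/-! ### Alexandrov angles -/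

/-- Euclidean comparison angle between sides of lengths `b`, `c` with opposite side `a`. -/
def eucCompAngle (b c a : ℝ) : ℝ := Real.arccos (eucAngleCos a b c)

/-- The Alexandrov angle between the geodesics `γ₁` and `γ₂` issuing from a common point
is `α`: the Euclidean comparison angles converge to `α` as both parameters tend to `0⁺`. -/
def HasAngleAt {X : Type*} [MetricSpace X] (γ₁ γ₂ : ℝ → X) (α : ℝ) : Prop :=
  Filter.Tendsto (fun p : ℝ × ℝ => eucCompAngle p.1 p.2 (dist (γ₁ p.1) (γ₂ p.2)))
    ((nhdsWithin 0 (Set.Ioi 0)) ×ˢ (nhdsWithin 0 (Set.Ioi 0))) (nhds α)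

/-- `∠ₓ(y, z) = α`: the Alexandrov angle at `x` between the geodesics `[xy]` and `[xz]`. -/
def AngleBetween {X : Type*} [MetricSpace X] (x y z : X) (α : ℝ) : Prop :=
  ∃ γ₁ γ₂ : ℝ → X, IsGeodesicParam γ₁ x y ∧ IsGeodesicParam γ₂ x z ∧ HasAngleAt γ₁ γ₂ α

/-- The triple `(a, b, c)` spans a degenerate (flat) triangle: one of the triangle
inequalities is an equality. -/
def DegenTriple {X : Type*} [MetricSpace X] (a b c : X) : Prop :=
  dist a c = dist a b + dist b c ∨ dist a b = dist a c + dist c b ∨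
    dist b c = dist b a + dist a c

/-! ### Isometric actions, domination, surface groups -/

/-- `ρ : Γ → Isom(X)`: an action of `Γ` on `X` by isometries. -/
structure IsIsomAction (Γ : Type*) [Group Γ] {X : Type*} [MetricSpace X]
    (ρ : Γ → X → X) : Prop where
  isom : ∀ γ : Γ, Isometry (ρ γ)
  one_act : ∀ x, ρ 1 x = x
  mul_act : ∀ γ δ x, ρ (γ * δ) x = ρ γ (ρ δ x)

/-- `f` is `(ρX, ρY)`-equivariant. -/
def EquivariantMap {Γ X Y : Type*} [Group Γ] (ρX : Γ → X → X) (ρY : Γ → Y → Y)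
    (f : X → Y) : Prop :=
  ∀ γ x, f (ρX γ x) = ρY γ (f x)

/-- `ρX` dominates `ρY`: there is a 1-Lipschitz equivariant map. -/
def Dominates {Γ X Y : Type*} [Group Γ] [MetricSpace X] [MetricSpace Y]
    (ρX : Γ → X → X) (ρY : Γ → Y → Y) : Prop :=
  ∃ f : X → Y, LipschitzWith 1 f ∧ EquivariantMap ρX ρY f

/-- `ρX` strictly dominates `ρY`: there is a `c`-Lipschitz equivariant map with `c < 1`. -/
def StrictlyDominates {Γ X Y : Type*} [Group Γ] [MetricSpace X] [MetricSpace Y]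
    (ρX : Γ → X → X) (ρY : Γ → Y → Y) : Prop :=
  ∃ c : NNReal, c < 1 ∧ ∃ f : X → Y, LipschitzWith c f ∧ EquivariantMap ρX ρY f

/-- The action of `Γ` on `X` via `ρ` is evanescent: there is an unbounded set `T ⊆ X`
on which all displacement functions of finitely many group elements are bounded. -/
def Evanescent {Γ X : Type*} [Group Γ] [MetricSpace X] (ρ : Γ → X → X) : Prop :=
  ∃ T : Set X, ¬ Bornology.IsBounded T ∧
    ∀ K : Finset Γ, ∃ C : ℝ, ∀ x ∈ T, ∀ γ ∈ K, dist x (ρ γ x) ≤ C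

/-- The relator `[a₁,b₁]⋯[a_g,b_g]` of the genus-`g` surface group. -/
def surfaceRelator (g : ℕ) : FreeGroup (Fin g × Bool) :=
  (List.ofFn fun i : Fin g =>
    FreeGroup.of (i, false) * FreeGroup.of (i, true) *
      (FreeGroup.of (i, false))⁻¹ * (FreeGroup.of (i, true))⁻¹).prod

/-- The fundamental group `Γ = π₁(S_g)` of the closed orientable surface of genus `g`. -/
abbrev SurfaceGroup (g : ℕ) : Type :=
  PresentedGroup ({surfaceRelator g} : Set (FreeGroup (Fin g × Bool)))

/-- `j : Γ → Isom(ℍ²)` is Fuchsian: it is the holonomy of a hyperbolic structure, i.e.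
an isometric action which is free and properly discontinuous (uniformly separated at
each point) and cocompact. -/
def IsFuchsian {Γ : Type*} [Group Γ] (j : Γ → UpperHalfPlane → UpperHalfPlane) : Prop :=
  IsIsomAction Γ j ∧
    (∀ x : UpperHalfPlane, ∃ ε > 0, ∀ γ : Γ, γ ≠ 1 → ε ≤ dist x (j γ x)) ∧
    (∃ R : ℝ, ∀ x y : UpperHalfPlane, ∃ γ : Γ, dist x (j γ y) ≤ R)

/-! ### Equivariant triangulations of the universal cover -/

/-- The 1-skeleton of the lift `T̃` to the universal cover `S̃` of a (finite) triangulation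
`T` of the surface `S`, with its deck transformation action of `Γ`: a graph with a free
`Γ`-action, finite fundamental domains `V₀`, `E₀` of vertices and edges, and connected. -/
structure EquivGraph (Γ : Type*) [Group Γ] where
  V : Type
  E : Type
  src : E → V
  tgt : E → V
  actV : Γ → V → V
  actE : Γ → E → E
  actV_one : ∀ v, actV 1 v = v
  actV_mul : ∀ γ δ v, actV (γ * δ) v = actV γ (actV δ v)
  actE_one : ∀ e, actE 1 e = e
  actE_mul : ∀ γ δ e, actE (γ * δ) e = actE γ (actE δ e)
  src_act : ∀ γ e, src (actE γ e) = actV γ (src e)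
  tgt_act : ∀ γ e, tgt (actE γ e) = actV γ (tgt e)
  V₀ : Finset V
  E₀ : Finset E
  fund_V : ∀ v : V, ∃ γ : Γ, ∃ v₀ ∈ V₀, actV γ v₀ = v
  fund_E : ∀ e : E, ∃ γ : Γ, ∃ e₀ ∈ E₀, actE γ e₀ = e
  free_V : ∀ γ v, actV γ v = v → γ = 1
  conn : ∀ v w : V,
    Relation.ReflTransGen
      (fun a b => ∃ e, (src e = a ∧ tgt e = b) ∨ (src e = b ∧ tgt e = a)) v w

/-- A `ρ`-equivariant map on the vertices of the lifted triangulation. -/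
def gEquivMap {Γ : Type*} [Group Γ] {X : Type*} [MetricSpace X]
    (G : EquivGraph Γ) (ρ : Γ → X → X) (F : G.V → X) : Prop :=
  ∀ γ v, F (G.actV γ v) = ρ γ (F v)

/-- The energy of an equivariant map: the sum over a fundamental domain of edges of the
squared lengths `ℓ_F(e)²`. -/
def energy {Γ : Type*} [Group Γ] {X : Type*} [MetricSpace X]
    (G : EquivGraph Γ) (F : G.V → X) : ℝ :=
  ∑ e ∈ G.E₀, dist (F (G.src e)) (F (G.tgt e)) ^ 2

/-- `F` is harmonic: an equivariant map minimizing the energy among equivariant maps. -/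
def Harmonic {Γ : Type*} [Group Γ] {X : Type*} [MetricSpace X]
    (G : EquivGraph Γ) (ρ : Γ → X → X) (F : G.V → X) : Prop :=
  gEquivMap G ρ F ∧ ∀ F' : G.V → X, gEquivMap G ρ F' → energy G F ≤ energy G F'

/-- `y : Fin N → V` enumerates the neighbours of `x` (with multiplicity): the darts at `x`
are in bijection with `Fin N`, `y i` being the opposite endpoint of the `i`-th dart. -/
def NeighborEnum {Γ : Type*} [Group Γ] (G : EquivGraph Γ) (x : G.V)
    {N : ℕ} (y : Fin N → G.V) : Prop :=
  ∃ d : Fin N ≃ ({e : G.E // G.src e = x} ⊕ {e : G.E // G.tgt e = x}),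
    ∀ i, y i = Sum.elim (fun e => G.tgt e.1) (fun e => G.src e.1) (d i)

/-- A lifted triangulation: the lifted graph together with its (2-dimensional) faces and
the deck action on them. The face `f` has vertices `fv f k` and edges `fe f k` joining
`fv f k` to `fv f (k+1)`. -/
structure EquivTriangulation (Γ : Type*) [Group Γ] extends EquivGraph Γ where
  Fc : Type
  fv : Fc → Fin 3 → V
  fe : Fc → Fin 3 → E
  fe_src : ∀ f k, src (fe f k) = fv f k
  fe_tgt : ∀ f k, tgt (fe f k) = fv f (k + 1)
  actF : Γ → Fc → Fc
  actF_one : ∀ f, actF 1 f = f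
  actF_mul : ∀ γ δ f, actF (γ * δ) f = actF γ (actF δ f)
  fv_act : ∀ γ f k, fv (actF γ f) k = actV γ (fv f k)
  fe_act : ∀ γ f k, fe (actF γ f) k = actE γ (fe f k)

/-- A realization of the universal cover `C̃` of the conical hyperbolic structure
associated to the metric triangulation `(T, ℓ)`: a metric space `Y` with the associated
representation `ρF`, in which each face is realized as an isometrically embedded solid
hyperbolic triangle (of side lengths prescribed by `ℓ`), equivariantly, these triangles
covering `Y` and glued along the combinatorics of `T`. -/
structure ConicalRealization (Γ : Type*) [Group Γ] (T : EquivTriangulation Γ)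
    (ℓ : T.E → ℝ) (Y : Type*) [MetricSpace Y] (ρF : Γ → Y → Y) where
  q : T.V → Y
  A : T.Fc → Fin 3 → UpperHalfPlane
  φ : T.Fc → UpperHalfPlane → Y
  isomAct : IsIsomAction Γ ρF
  q_equiv : ∀ γ v, q (T.actV γ v) = ρF γ (q v)
  side_len : ∀ f k, dist (A f k) (A f (k + 1)) = ℓ (T.fe f k)
  map_vertex : ∀ f k, φ f (A f k) = q (T.fv f k)
  map_isom : ∀ f, ∀ p ∈ mTriangle (A f 0) (A f 1) (A f 2),
    ∀ p' ∈ mTriangle (A f 0) (A f 1) (A f 2), dist (φ f p) (φ f p') = dist p p'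
  A_act : ∀ γ f, A (T.actF γ f) = A f
  map_equiv : ∀ γ f p, φ (T.actF γ f) p = ρF γ (φ f p)
  cover : ∀ y : Y, ∃ f, ∃ p ∈ mTriangle (A f 0) (A f 1) (A f 2), φ f p = y

/-! ### Plain (compact) triangulations and conical structures -/

/-- A triangulation of the surface `S` (combinatorial data only). -/
structure Triang where
  V : Type
  E : Type
  Fc : Type
  src : E → V
  tgt : E → V
  fv : Fc → Fin 3 → V
  fe : Fc → Fin 3 → E
  fe_src : ∀ f k, src (fe f k) = fv f k
  fe_tgt : ∀ f k, tgt (fe f k) = fv f (k + 1)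

/-- A realization of the conical hyperbolic structure `C_{(T,ℓ)}`: each face is realized
as an isometrically embedded solid hyperbolic triangle with side lengths prescribed by
`ℓ`, the faces cover `C` and are glued along edges (`qE e` is the common arclength
parametrization of the edge `e` in `C`). -/
structure Realization (T : Triang) (ℓ : T.E → ℝ) (C : Type*) [MetricSpace C] where
  q : T.V → C
  qE : T.E → ℝ → C
  A : T.Fc → Fin 3 → UpperHalfPlane
  φ : T.Fc → UpperHalfPlane → C
  side_len : ∀ f k, dist (A f k) (A f (k + 1)) = ℓ (T.fe f k)
  map_vertex : ∀ f k, φ f (A f k) = q (T.fv f k)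
  map_isom : ∀ f, ∀ p ∈ mTriangle (A f 0) (A f 1) (A f 2),
    ∀ p' ∈ mTriangle (A f 0) (A f 1) (A f 2), dist (φ f p) (φ f p') = dist p p'
  edge_glue : ∀ f k, ∀ p ∈ mSeg (A f k) (A f (k + 1)),
    φ f p = qE (T.fe f k) (dist (A f k) p)
  cover : ∀ c : C, ∃ f, ∃ p ∈ mTriangle (A f 0) (A f 1) (A f 2), φ f p = c

/-- The sum of the three angles of the hyperbolic triangle realizing the face `f` of the
metric triangulation `(T, ℓ)`. -/
def faceAngleSum (T : Triang) (ℓ : T.E → ℝ) (f : T.Fc) : ℝ :=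
  hypCompAngle (ℓ (T.fe f 0)) (ℓ (T.fe f 1)) (ℓ (T.fe f 2)) +
    hypCompAngle (ℓ (T.fe f 1)) (ℓ (T.fe f 2)) (ℓ (T.fe f 0)) +
    hypCompAngle (ℓ (T.fe f 2)) (ℓ (T.fe f 0)) (ℓ (T.fe f 1))

/-- The length function `ℓ` flattens the face `f`: the triangle inequality is an
equality on `f`. -/
def FlatFace (T : Triang) (ℓ : T.E → ℝ) (f : T.Fc) : Prop :=
  ℓ (T.fe f 0) = ℓ (T.fe f 1) + ℓ (T.fe f 2) ∨
    ℓ (T.fe f 1) = ℓ (T.fe f 2) + ℓ (T.fe f 0) ∨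
    ℓ (T.fe f 2) = ℓ (T.fe f 0) + ℓ (T.fe f 1)

/-- Nearest-point projection of `[0, l+ε]` onto `[ε/2, l+ε/2]`, shifted by `-ε/2`. -/
def projParam (l ε s : ℝ) : ℝ := min (max (s - ε / 2) 0) l

/-- The intrinsic (angular) distance on the unit sphere of `ℝ³`. -/
def sphDist (u v : EuclideanSpace ℝ (Fin 3)) : ℝ := Real.arccos (inner ℝ u v)

/-- Base angle of the isoceles hyperbolic triangle with sides `(a+ε, a+ε, ε)`. -/
def baseAngle (a ε : ℝ) : ℝ :=
  Real.arccos ((Real.cosh ε * Real.cosh (a + ε) - Real.cosh (a + ε)) /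
    (Real.sinh ε * Real.sinh (a + ε)))

/-- Apex angle (opposite the side of length `ε`) of the hyperbolic triangle with sides
`(a+ε, a+ε, ε)`. -/
def apexAngle (a ε : ℝ) : ℝ :=
  Real.arccos ((Real.cosh (a + ε) * Real.cosh (a + ε) - Real.cosh ε) /
    (Real.sinh (a + ε) * Real.sinh (a + ε)))

/-- The angle of the equilateral hyperbolic triangle of side length `ε`. -/
def eqAngle (ε : ℝ) : ℝ :=
  Real.arccos ((Real.cosh ε ^ 2 - Real.cosh ε) / (Real.sinh ε ^ 2))




section AuxAnalytic
open Real

private lemma le_of_sq_le_sq' {x y : ℝ} (h : x ^ 2 ≤ y ^ 2) (hy : 0 ≤ y) : x ≤ y :=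
  calc x ≤ |x| := le_abs_self x
  _ = √(x ^ 2) := (Real.sqrt_sq_eq_abs x).symm
  _ ≤ √(y ^ 2) := Real.sqrt_le_sqrt h
  _ = y := Real.sqrt_sq hy

private lemma aux_sinh_nonneg {x : ℝ} (hx : 0 ≤ x) : 0 ≤ sinh x := by
  rw [← Real.sinh_zero]
  exact Real.sinh_le_sinh.mpr hx

private lemma aux_sinh_le_mul_cosh {x : ℝ} (hx : 0 ≤ x) : sinh x ≤ x * cosh x := by
  have hmono : MonotoneOn (fun t : ℝ => t * cosh t - sinh t) (Set.Ici 0) := by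
    refine monotoneOn_of_deriv_nonneg (convex_Ici 0) ?_ ?_ ?_
    · exact ((continuous_id.mul Real.continuous_cosh).sub Real.continuous_sinh).continuousOn
    · intro t _
      exact (((hasDerivAt_id t).mul (Real.hasDerivAt_cosh t)).sub
        (Real.hasDerivAt_sinh t)).differentiableAt.differentiableWithinAt
    · intro t ht
      rw [interior_Ici] at ht
      have h : HasDerivAt (fun t : ℝ => t * cosh t - sinh t)
          (1 * cosh t + t * sinh t - cosh t) t :=
        ((hasDerivAt_id t).mul (Real.hasDerivAt_cosh t)).sub (Real.hasDerivAt_sinh t)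
      rw [h.deriv]
      have h1 : 0 ≤ sinh t := aux_sinh_nonneg (le_of_lt ht)
      nlinarith [mul_nonneg (le_of_lt ht) h1]
  have := hmono (Set.mem_Ici.mpr le_rfl) (Set.mem_Ici.mpr hx) hx
  simpa using this

private lemma aux_mul_sinh {a b : ℝ} (ha : 0 ≤ a) (hab : a ≤ b) :
    b * sinh a ≤ a * sinh b := by
  have hmono : MonotoneOn (fun t : ℝ => a * sinh t - t * sinh a) (Set.Ici a) := by
    refine monotoneOn_of_deriv_nonneg (convex_Ici a) ?_ ?_ ?_
    · exact ((continuous_const.mul Real.continuous_sinh).sub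
        (continuous_id.mul continuous_const)).continuousOn
    · intro t _
      exact (((Real.hasDerivAt_sinh t).const_mul a).sub
        ((hasDerivAt_id t).mul_const (sinh a))).differentiableAt.differentiableWithinAt
    · intro t ht
      rw [interior_Ici] at ht
      have h : HasDerivAt (fun t : ℝ => a * sinh t - t * sinh a)
          (a * cosh t - 1 * sinh a) t :=
        ((Real.hasDerivAt_sinh t).const_mul a).sub ((hasDerivAt_id t).mul_const (sinh a))
      rw [h.deriv]
      have h1 : cosh a ≤ cosh t := Real.cosh_le_cosh.mpr (by
        rw [abs_of_nonneg ha, abs_of_nonneg (le_of_lt (lt_of_le_of_lt ha ht))]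
        exact le_of_lt ht)
      have h2 : sinh a ≤ a * cosh a := aux_sinh_le_mul_cosh ha
      nlinarith [mul_le_mul_of_nonneg_left h1 ha]
  have := hmono (Set.mem_Ici.mpr le_rfl) (Set.mem_Ici.mpr hab) hab
  simp only [sub_self] at this
  nlinarith [this]

private lemma aux_diff_mono {V u h : ℝ} (hV : 0 ≤ V) (hVu : V ≤ u) (hh : 0 ≤ h) :
    cosh (√(V + h)) - cosh (√V) ≤ cosh (√(u + h)) - cosh (√u) := by
  rcases eq_or_lt_of_le hh with rfl | hh'
  · simp
  have hmono : MonotoneOn (fun x : ℝ => cosh (√(x + h)) - cosh (√x)) (Set.Ici 0) := by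
    have hder : ∀ x : ℝ, 0 < x → HasDerivAt (fun x : ℝ => cosh (√(x + h)) - cosh (√x))
        (sinh (√(x + h)) * (1 / (2 * √(x + h)) * 1) - sinh (√x) * (1 / (2 * √x))) x := by
      intro x hx
      have h1 : HasDerivAt (fun y : ℝ => y + h) 1 x := (hasDerivAt_id x).add_const h
      have h2 : HasDerivAt (fun y : ℝ => √(y + h)) (1 / (2 * √(x + h)) * 1) x :=
        (Real.hasDerivAt_sqrt (by positivity)).comp x h1
      have h3 : HasDerivAt (fun y : ℝ => cosh (√(y + h)))
          (sinh (√(x + h)) * (1 / (2 * √(x + h)) * 1)) x :=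
        h2.cosh
      have h4 : HasDerivAt (fun y : ℝ => cosh (√y)) (sinh (√x) * (1 / (2 * √x))) x :=
        (Real.hasDerivAt_cosh (√x)).comp x (Real.hasDerivAt_sqrt (ne_of_gt hx))
      exact h3.sub h4
    refine monotoneOn_of_deriv_nonneg (convex_Ici 0) ?_ ?_ ?_
    · exact ((Real.continuous_cosh.comp (Real.continuous_sqrt.comp
        (continuous_id.add continuous_const))).sub
        (Real.continuous_cosh.comp Real.continuous_sqrt)).continuousOn
    · intro x hx
      rw [interior_Ici] at hx
      exact (hder x hx).differentiableAt.differentiableWithinAt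
    · intro x hx
      rw [interior_Ici] at hx
      replace hx : 0 < x := hx
      rw [(hder x hx).deriv]
      have ha : 0 < √x := Real.sqrt_pos.mpr hx
      have hb : 0 < √(x + h) := Real.sqrt_pos.mpr (by linarith)
      have hab : √x ≤ √(x + h) := Real.sqrt_le_sqrt (by linarith)
      have key := aux_mul_sinh (le_of_lt ha) hab
      rw [sub_nonneg, mul_one]
      rw [mul_one_div, mul_one_div, div_le_div_iff₀ (by positivity) (by positivity)]
      nlinarith [key]
  have := hmono (Set.mem_Ici.mpr hV) (Set.mem_Ici.mpr (le_trans hV hVu)) hVu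
  simpa using this

private lemma aux_schur {u U V : ℝ} (hV : 0 ≤ V) (hVu : V ≤ u) (huU : u ≤ U) :
    cosh (√u) + cosh (√(U + V - u)) ≤ cosh (√U) + cosh (√V) := by
  have h := aux_diff_mono hV hVu (sub_nonneg.mpr huU)
  rw [show V + (U - u) = U + V - u by ring, show u + (U - u) = U by ring] at h
  linarith

private lemma aux_cosh_arcosh {K : ℝ} (hK : 1 ≤ K) : cosh (arcosh K) = K := by
  have h1 : 0 ≤ K ^ 2 - 1 := by nlinarith
  have h2 : 0 < K + √(K ^ 2 - 1) := by
    have := Real.sqrt_nonneg (K ^ 2 - 1); linarith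
  have h3 : (K + √(K ^ 2 - 1)) * (K - √(K ^ 2 - 1)) = 1 := by
    have := Real.sq_sqrt h1; nlinarith [this]
  rw [arcosh, Real.cosh_eq, Real.exp_log h2, Real.exp_neg, Real.exp_log h2,
    inv_eq_of_mul_eq_one_right h3]
  ring

private lemma aux_arcosh_nonneg {K : ℝ} (hK : 1 ≤ K) : 0 ≤ arcosh K :=
  Real.log_nonneg (by have := Real.sqrt_nonneg (K ^ 2 - 1); linarith)

private lemma aux_cosh_add_cosh (p q : ℝ) :
    cosh p + cosh q = 2 * cosh ((p + q) / 2) * cosh ((p - q) / 2) := by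
  have h1 := Real.cosh_add ((p + q) / 2) ((p - q) / 2)
  have h2 := Real.cosh_sub ((p + q) / 2) ((p - q) / 2)
  rw [show (p + q) / 2 + (p - q) / 2 = p by ring] at h1
  rw [show (p + q) / 2 - (p - q) / 2 = q by ring] at h2
  linarith

private lemma aux_two_cosh_half_le {a c b : ℝ} (ha : 0 ≤ a) (hc : 0 ≤ c)
    (hb : 0 ≤ b) (ht : b ≤ a + c) : 2 * cosh (b / 2) ≤ cosh a + cosh c := by
  have h1 : cosh (b / 2) ≤ cosh ((a + c) / 2) := Real.cosh_le_cosh.mpr (by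
    rw [abs_of_nonneg (by linarith), abs_of_nonneg (by linarith)]; linarith)
  have h2 := aux_cosh_add_cosh a c
  nlinarith [Real.one_le_cosh ((a - c) / 2), Real.cosh_pos ((a + c) / 2)]

private lemma aux_euclid_core {d1 d2 b dE : ℝ} (h1 : 0 ≤ d1) (h2 : 0 ≤ d2) (hb : 0 ≤ b)
    (t1 : b ≤ d1 + d2) (t2 : d1 ≤ b + d2) (t3 : d2 ≤ b + d1)
    (hdEnn : 0 ≤ dE) (hdEsq : dE ^ 2 = d1 ^ 2 / 2 + d2 ^ 2 / 2 - b ^ 2 / 4) :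
    cosh d1 + cosh d2 ≤ 2 * cosh (b / 2) * cosh dE := by
  have hVle : (dE - b / 2) ^ 2 ≤ d1 ^ 2 := by
    rcases le_or_gt d2 d1 with hcase | hcase
    · have hd2sq : d2 ^ 2 ≤ d1 ^ 2 := by nlinarith
      nlinarith [hdEsq, mul_nonneg hdEnn hb]
    · have A : 0 ≤ (b - (d2 - d1)) * (b + (d2 - d1)) :=
        mul_nonneg (by linarith) (by linarith)
      have B : 0 ≤ (d1 + d2 - b) * (d1 + d2 + b) :=
        mul_nonneg (by linarith) (by linarith)
      have hsq : ((d2 ^ 2 - d1 ^ 2) / 2) ^ 2 ≤ (dE * b) ^ 2 := by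
        have hEb : (dE * b) ^ 2 = (d1 ^ 2 / 2 + d2 ^ 2 / 2 - b ^ 2 / 4) * b ^ 2 := by
          rw [mul_pow, hdEsq]
        rw [hEb]
        nlinarith [mul_nonneg A B]
      have key : (d2 ^ 2 - d1 ^ 2) / 2 ≤ dE * b :=
        le_of_sq_le_sq' hsq (mul_nonneg hdEnn hb)
      nlinarith [hdEsq]
  have hUge : d1 ^ 2 ≤ (dE + b / 2) ^ 2 := by
    rcases le_or_gt d1 (b / 2) with hcase | hcase
    · nlinarith [mul_nonneg hdEnn hb, sq_nonneg dE, mul_self_le_mul_self h1 hcase]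
    · have hd1b : (d1 - b) ^ 2 ≤ d2 ^ 2 := sq_le_sq' (by linarith) (by linarith)
      have hsq : (d1 - b / 2) ^ 2 ≤ dE ^ 2 := by nlinarith [hdEsq]
      have key : d1 - b / 2 ≤ dE := le_of_sq_le_sq' hsq hdEnn
      nlinarith
  have hschur := aux_schur (sq_nonneg (dE - b / 2)) hVle hUge
  rw [show (dE + b / 2) ^ 2 + (dE - b / 2) ^ 2 - d1 ^ 2 = d2 ^ 2 by
    nlinarith [hdEsq]] at hschur
  rw [Real.sqrt_sq h1, Real.sqrt_sq h2, Real.sqrt_sq (by linarith : 0 ≤ dE + b / 2),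
    Real.sqrt_sq_eq_abs, Real.cosh_abs] at hschur
  have hfin := aux_cosh_add_cosh (dE + b / 2) (dE - b / 2)
  rw [show (dE + b / 2 + (dE - b / 2)) / 2 = dE by ring,
    show (dE + b / 2 - (dE - b / 2)) / 2 = b / 2 by ring] at hfin
  calc cosh d1 + cosh d2 ≤ cosh (dE + b / 2) + cosh (dE - b / 2) := hschur
  _ = 2 * cosh dE * cosh (b / 2) := hfin
  _ = 2 * cosh (b / 2) * cosh dE := by ring

private lemma aux_euclid_from_cosh {d1 d2 b : ℝ} (h1 : 0 ≤ d1) (h2 : 0 ≤ d2) (hb : 0 ≤ b)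
    (t1 : b ≤ d1 + d2) (t2 : d1 ≤ b + d2) (t3 : d2 ≤ b + d1) :
    cosh d1 + cosh d2 ≤
      2 * cosh (b / 2) * cosh (√(d1 ^ 2 / 2 + d2 ^ 2 / 2 - b ^ 2 / 4)) := by
  have hEnn : 0 ≤ d1 ^ 2 / 2 + d2 ^ 2 / 2 - b ^ 2 / 4 := by
    nlinarith [sq_nonneg (d1 - d2), mul_self_le_mul_self hb t1]
  exact aux_euclid_core h1 h2 hb t1 t2 t3 (Real.sqrt_nonneg _) (Real.sq_sqrt hEnn)

end AuxAnalytic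

section MidSection

variable {X : Type*} [MetricSpace X]

/-- The chosen midpoint of `x` and `y`. -/
private def midOf (h : GeodesicSpace X) (x y : X) : X :=
  (h x y).choose (dist x y / 2)

private lemma midOf_dist_left (h : GeodesicSpace X) (x y : X) :
    dist x (midOf h x y) = dist x y / 2 := by
  obtain ⟨h0, hd, hiso⟩ := (h x y).choose_spec
  have hmem0 : (0 : ℝ) ∈ Set.Icc (0 : ℝ) (dist x y) := ⟨le_rfl, dist_nonneg⟩
  have hmemh : dist x y / 2 ∈ Set.Icc (0 : ℝ) (dist x y) :=
    ⟨by positivity, half_le_self dist_nonneg⟩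
  have := hiso 0 hmem0 (dist x y / 2) hmemh
  rw [h0] at this
  rw [midOf, this, zero_sub, abs_neg, abs_of_nonneg (by positivity)]

private lemma midOf_dist_right (h : GeodesicSpace X) (x y : X) :
    dist y (midOf h x y) = dist x y / 2 := by
  obtain ⟨h0, hd, hiso⟩ := (h x y).choose_spec
  have hmemd : dist x y ∈ Set.Icc (0 : ℝ) (dist x y) := ⟨dist_nonneg, le_rfl⟩
  have hmemh : dist x y / 2 ∈ Set.Icc (0 : ℝ) (dist x y) :=
    ⟨by positivity, half_le_self dist_nonneg⟩
  have := hiso (dist x y) hmemd (dist x y / 2) hmemh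
  rw [hd] at this
  rw [midOf, this, show dist x y - dist x y / 2 = dist x y / 2 by ring,
    abs_of_nonneg (by positivity)]

/-- cosh comparison (CN) inequality for the chosen midpoint. -/
private lemma coshCN_mid (hX : IsCATMinusOne X) (x y z : X) :
    Real.cosh (dist z (midOf hX.1 x y)) * (2 * Real.cosh (dist x y / 2)) ≤
      Real.cosh (dist y z) + Real.cosh (dist x z) := by
  by_cases hb : dist x y = 0
  · have hxy : x = y := dist_eq_zero.mp hb
    have hm : midOf hX.1 x y = x := by
      have := midOf_dist_left hX.1 x y
      rw [hb] at this
      exact (dist_eq_zero.mp (by simpa using this)).symm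
    rw [hm, hb, ← hxy, dist_comm z x]
    norm_num [Real.cosh_zero]
    linarith
  by_cases hc : dist x z = 0
  · have hxz : x = z := dist_eq_zero.mp hc
    have h2 : Real.cosh (2 * (dist x y / 2)) =
        2 * Real.cosh (dist x y / 2) ^ 2 - 1 := by
      rw [Real.cosh_two_mul, Real.sinh_sq]; ring
    rw [show (2 : ℝ) * (dist x y / 2) = dist x y by ring] at h2
    have hdzm : dist z (midOf hX.1 x y) = dist x y / 2 := by
      rw [← hxz]; exact midOf_dist_left hX.1 x y
    rw [hdzm, hc, ← hxz, dist_comm y x, Real.cosh_zero]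
    nlinarith [h2]
  · have hb' : 0 < dist x y := lt_of_le_of_ne dist_nonneg (Ne.symm hb)
    have hc' : 0 < dist x z := lt_of_le_of_ne dist_nonneg (Ne.symm hc)
    obtain ⟨γ₂, hγ₂⟩ := hX.1 x z
    have hγ₁ := (hX.1 x y).choose_spec
    have key := hX.2 x y z (hX.1 x y).choose γ₂ hγ₁ hγ₂
      (dist x y / 2) ⟨by positivity, half_le_self dist_nonneg⟩
      (dist x z) ⟨dist_nonneg, le_rfl⟩
    rw [hγ₂.2.1] at key
    set a := dist y z with ha
    set b := dist x y with hbd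
    set c := dist x z with hcd
    have hsb2 : 0 < Real.sinh (b / 2) := Real.sinh_pos_iff.mpr (by positivity)
    have hcb2 : 0 < Real.cosh (b / 2) := Real.cosh_pos _
    have hsc : 0 < Real.sinh c := Real.sinh_pos_iff.mpr hc'
    have hsb : Real.sinh b = 2 * Real.sinh (b / 2) * Real.cosh (b / 2) := by
      have := Real.sinh_two_mul (b / 2)
      rwa [show 2 * (b / 2) = b by ring] at this
    have hcbb : Real.cosh b = 2 * Real.cosh (b / 2) ^ 2 - 1 := by
      have := Real.cosh_two_mul (b / 2)
      rw [show 2 * (b / 2) = b by ring] at this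
      rw [this, Real.sinh_sq]; ring
    have heq : hypCompDist a b c (b / 2) c =
        arcosh ((Real.cosh a + Real.cosh c) / (2 * Real.cosh (b / 2))) := by
      rw [hypCompDist, hypAngleCos]
      congr 1
      rw [hsb, hcbb]
      field_simp
      ring
    have hK1 : 1 ≤ (Real.cosh a + Real.cosh c) / (2 * Real.cosh (b / 2)) := by
      rw [le_div_iff₀ (by positivity)]
      have htr : b ≤ a + c := by
        rw [ha, hbd, hcd, dist_comm y z]
        calc dist x y ≤ dist x z + dist z y := dist_triangle x z y
        _ = dist z y + dist x z := by ring
      have ha' : (0:ℝ) ≤ a := dist_nonneg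
      have hc0 : (0:ℝ) ≤ c := dist_nonneg
      have hb0 : (0:ℝ) ≤ b := dist_nonneg
      have := aux_two_cosh_half_le ha' hc0 hb0 htr
      linarith
    have hcosh : Real.cosh (dist z (midOf hX.1 x y)) ≤
        (Real.cosh a + Real.cosh c) / (2 * Real.cosh (b / 2)) := by
      rw [← aux_cosh_arcosh hK1]
      apply Real.cosh_le_cosh.mpr
      rw [abs_of_nonneg dist_nonneg, abs_of_nonneg (aux_arcosh_nonneg hK1)]
      calc dist z (midOf hX.1 x y) = dist (midOf hX.1 x y) z := dist_comm _ _
      _ ≤ hypCompDist a b c (b / 2) c := key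
      _ = arcosh ((Real.cosh a + Real.cosh c) / (2 * Real.cosh (b / 2))) := heq
    calc Real.cosh (dist z (midOf hX.1 x y)) * (2 * Real.cosh (b / 2))
        ≤ (Real.cosh a + Real.cosh c) / (2 * Real.cosh (b / 2)) *
          (2 * Real.cosh (b / 2)) := by
          apply mul_le_mul_of_nonneg_right hcosh (by positivity)
      _ = Real.cosh a + Real.cosh c := by field_simp

private lemma eq_of_cosh_le_one {p q : X} (h : Real.cosh (dist p q) ≤ 1) : p = q := by
  by_contra hne
  have hd : 0 < dist p q := dist_pos.mpr hne
  have : Real.cosh 0 < Real.cosh (dist p q) := Real.cosh_lt_cosh.mpr (by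
    rw [abs_zero, abs_of_nonneg dist_nonneg]; exact hd)
  rw [Real.cosh_zero] at this
  linarith

/-- Any metric midpoint equals the chosen one. -/
private lemma midOf_unique (hX : IsCATMinusOne X) {x y m : X}
    (hm1 : dist x m = dist x y / 2) (hm2 : dist y m = dist x y / 2) :
    m = midOf hX.1 x y := by
  have h := coshCN_mid hX x y m
  rw [hm1, hm2] at h
  have hpos : 0 < Real.cosh (dist x y / 2) := Real.cosh_pos _
  apply eq_of_cosh_le_one
  nlinarith [h]

/-- cosh CN inequality for an arbitrary metric midpoint. -/
private lemma coshCN (hX : IsCATMinusOne X) {x y m : X} (z : X)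
    (hm1 : dist x m = dist x y / 2) (hm2 : dist y m = dist x y / 2) :
    Real.cosh (dist z m) * (2 * Real.cosh (dist x y / 2)) ≤
      Real.cosh (dist y z) + Real.cosh (dist x z) := by
  rw [show m = midOf hX.1 x y from midOf_unique hX hm1 hm2]
  exact coshCN_mid hX x y z

/-- Euclidean CN inequality. -/
private lemma euclidCN (hX : IsCATMinusOne X) {x y m : X} (z : X)
    (hm1 : dist x m = dist x y / 2) (hm2 : dist y m = dist x y / 2) :
    dist z m ^ 2 ≤ dist z x ^ 2 / 2 + dist z y ^ 2 / 2 - dist x y ^ 2 / 4 := by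
  have t1 : dist x y ≤ dist x z + dist y z := by
    have := dist_triangle x z y
    rw [dist_comm z y] at this
    linarith
  have t2 : dist x z ≤ dist x y + dist y z := dist_triangle x y z
  have t3 : dist y z ≤ dist x y + dist x z := by
    have := dist_triangle y x z
    rw [dist_comm y x] at this
    linarith
  have hkey := coshCN hX z hm1 hm2
  have heuc := aux_euclid_from_cosh (dist_nonneg) (dist_nonneg) (dist_nonneg) t1 t2 t3
  have hEnn : 0 ≤ dist x z ^ 2 / 2 + dist y z ^ 2 / 2 - dist x y ^ 2 / 4 := by
    nlinarith [mul_self_le_mul_self (dist_nonneg : (0:ℝ) ≤ dist x y) t1,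
      sq_nonneg (dist x z - dist y z)]
  have hcosh : Real.cosh (dist z m) ≤
      Real.cosh (√(dist x z ^ 2 / 2 + dist y z ^ 2 / 2 - dist x y ^ 2 / 4)) := by
    have hpos : 0 < Real.cosh (dist x y / 2) := Real.cosh_pos _
    nlinarith [hkey, heuc, hpos]
  have hle := Real.cosh_le_cosh.mp hcosh
  rw [abs_of_nonneg dist_nonneg, abs_of_nonneg (Real.sqrt_nonneg _)] at hle
  have hsq : dist z m ^ 2 ≤
      (√(dist x z ^ 2 / 2 + dist y z ^ 2 / 2 - dist x y ^ 2 / 4)) ^ 2 :=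
    pow_le_pow_left₀ dist_nonneg hle 2
  rw [Real.sq_sqrt hEnn] at hsq
  rw [dist_comm z x, dist_comm z y]
  linarith

private lemma midOf_map (hX : IsCATMinusOne X) (f : X → X) (hf : Isometry f) (x y : X) :
    f (midOf hX.1 x y) = midOf hX.1 (f x) (f y) := by
  apply midOf_unique hX
  · rw [hf.dist_eq, hf.dist_eq]
    exact midOf_dist_left hX.1 x y
  · rw [hf.dist_eq, hf.dist_eq]
    exact midOf_dist_right hX.1 x y

/-- Quadrilateral convexity. -/
private lemma midOf_quad (hX : IsCATMinusOne X) (x x' y y' : X) :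
    dist (midOf hX.1 x x') (midOf hX.1 y y') ≤ dist x y / 2 + dist x' y' / 2 := by
  set m := midOf hX.1 x x'
  set n := midOf hX.1 y y'
  set p := midOf hX.1 x' y
  have hm1 : dist x m = dist x x' / 2 := midOf_dist_left hX.1 x x'
  have hm2 : dist x' m = dist x x' / 2 := midOf_dist_right hX.1 x x'
  have hn1 : dist y n = dist y y' / 2 := midOf_dist_left hX.1 y y'
  have hn2 : dist y' n = dist y y' / 2 := midOf_dist_right hX.1 y y'
  have hp1 : dist x' p = dist x' y / 2 := midOf_dist_left hX.1 x' y
  have hp2 : dist y p = dist x' y / 2 := midOf_dist_right hX.1 x' y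
  have h1 : dist m p ^ 2 ≤ dist m x' ^ 2 / 2 + dist m y ^ 2 / 2 - dist x' y ^ 2 / 4 :=
    euclidCN hX m hp1 hp2
  have h2 : dist y m ^ 2 ≤ dist y x ^ 2 / 2 + dist y x' ^ 2 / 2 - dist x x' ^ 2 / 4 :=
    euclidCN hX y hm1 hm2
  have h3 : dist m p ^ 2 ≤ dist x y ^ 2 / 4 := by
    rw [dist_comm m x'] at h1
    rw [hm2] at h1
    rw [dist_comm m y] at h1
    rw [dist_comm y x, dist_comm y x'] at h2
    nlinarith [h1, h2]
  have h4 : dist p n ^ 2 ≤ dist p y ^ 2 / 2 + dist p y' ^ 2 / 2 - dist y y' ^ 2 / 4 :=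
    euclidCN hX p hn1 hn2
  have h5 : dist y' p ^ 2 ≤ dist y' x' ^ 2 / 2 + dist y' y ^ 2 / 2 - dist x' y ^ 2 / 4 :=
    euclidCN hX y' hp1 hp2
  have h6 : dist p n ^ 2 ≤ dist x' y' ^ 2 / 4 := by
    rw [dist_comm p y, hp2] at h4
    rw [dist_comm p y'] at h4
    rw [dist_comm y' x', dist_comm y' y] at h5
    nlinarith [h4, h5]
  have hmp : dist m p ≤ dist x y / 2 := by
    have := le_of_sq_le_sq' (x := dist m p) (y := dist x y / 2) (by nlinarith [h3])
      (by positivity)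
    exact this
  have hpn : dist p n ≤ dist x' y' / 2 := by
    exact le_of_sq_le_sq' (by nlinarith [h6]) (by positivity)
  calc dist m n ≤ dist m p + dist p n := dist_triangle m p n
  _ ≤ dist x y / 2 + dist x' y' / 2 := add_le_add hmp hpn

end MidSection

/-! ### Graph-level auxiliary machinery -/

section MainAux

variable {Γ : Type*} [Group Γ] {X : Type*} [MetricSpace X]

/-- Sum of squared distances over the vertex fundamental domain. -/
private def Dsq (G : EquivGraph Γ) (P F : G.V → X) : ℝ :=
  ∑ v ∈ G.V₀, dist (P v) (F v) ^ 2

private lemma Dsq_nonneg (G : EquivGraph Γ) (P F : G.V → X) : 0 ≤ Dsq G P F :=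
  Finset.sum_nonneg fun _ _ => sq_nonneg _

private lemma energy_nonneg (G : EquivGraph Γ) (F : G.V → X) : 0 ≤ energy G F :=
  Finset.sum_nonneg fun _ _ => sq_nonneg _

private lemma edge_sq_le (G : EquivGraph Γ) {ρ : Γ → X → X} (hρ : IsIsomAction Γ ρ)
    {F : G.V → X} (hF : gEquivMap G ρ F) (e : G.E) :
    dist (F (G.src e)) (F (G.tgt e)) ^ 2 ≤ energy G F := by
  obtain ⟨δ, e₀, he₀, hee⟩ := G.fund_E e
  have hlen : dist (F (G.src e)) (F (G.tgt e)) = dist (F (G.src e₀)) (F (G.tgt e₀)) := by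
    rw [← hee, G.src_act, G.tgt_act, hF, hF, (hρ.isom δ).dist_eq]
  rw [hlen, energy]
  exact Finset.single_le_sum (f := fun e => dist (F (G.src e)) (F (G.tgt e)) ^ 2)
    (fun i _ => sq_nonneg _) he₀

private lemma path_bound (G : EquivGraph Γ) {ρ : Γ → X → X} (hρ : IsIsomAction Γ ρ)
    (C : ℝ) (v w : G.V) :
    ∃ L : ℝ, ∀ F : G.V → X, gEquivMap G ρ F → energy G F ≤ C → dist (F v) (F w) ≤ L := by
  have hconn := G.conn v w
  induction hconn with
  | refl => exact ⟨0, fun F _ _ => by simp⟩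
  | @tail b c _ hbc ih =>
      obtain ⟨L, hL⟩ := ih
      refine ⟨L + Real.sqrt C, fun F hF hFC => ?_⟩
      obtain ⟨e, he⟩ := hbc
      have hedge : dist (F b) (F c) ≤ Real.sqrt C := by
        rcases he with ⟨h1, h2⟩ | ⟨h1, h2⟩
        · rw [← h1, ← h2]
          exact Real.le_sqrt_of_sq_le ((edge_sq_le G hρ hF e).trans hFC)
        · rw [← h1, ← h2, dist_comm]
          exact Real.le_sqrt_of_sq_le ((edge_sq_le G hρ hF e).trans hFC)
      calc dist (F v) (F c) ≤ dist (F v) (F b) + dist (F b) (F c) := dist_triangle _ _ _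
      _ ≤ L + Real.sqrt C := add_le_add (hL F hF hFC) hedge

/-- Existence of an equivariant map. -/
private lemma exists_equiv (G : EquivGraph Γ) {ρ : Γ → X → X} (hρ : IsIsomAction Γ ρ)
    [Nonempty X] : ∃ F : G.V → X, gEquivMap G ρ F := by
  classical
  let s : Setoid G.V := ⟨fun v w => ∃ γ : Γ, G.actV γ v = w, by
    constructor
    · exact fun v => ⟨1, G.actV_one v⟩
    · rintro v w ⟨γ, rfl⟩
      exact ⟨γ⁻¹, by rw [← G.actV_mul, inv_mul_cancel, G.actV_one]⟩
    · rintro u v w ⟨γ, rfl⟩ ⟨δ, rfl⟩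
      exact ⟨δ * γ, by rw [G.actV_mul]⟩⟩
  have hrep : ∀ v : G.V, ∃ γ : Γ, G.actV γ (Quotient.out (Quotient.mk s v)) = v :=
    fun v => Quotient.mk_out (s := s) v
  choose σ hσ using hrep
  have hout : ∀ (δ : Γ) (v : G.V),
      Quotient.out (Quotient.mk s (G.actV δ v)) = Quotient.out (Quotient.mk s v) := by
    intro δ v
    have : Quotient.mk s (G.actV δ v) = Quotient.mk s v :=
      Quotient.sound (Setoid.symm ⟨δ, rfl⟩)
    rw [this]
  have hσmul : ∀ (δ : Γ) (v : G.V), σ (G.actV δ v) = δ * σ v := by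
    intro δ v
    have h1 : G.actV (σ (G.actV δ v)) (Quotient.out (Quotient.mk s v)) = G.actV δ v := by
      have := hσ (G.actV δ v)
      rwa [hout δ v] at this
    have h2 : G.actV (δ * σ v) (Quotient.out (Quotient.mk s v)) = G.actV δ v := by
      rw [G.actV_mul, hσ]
    have h3 : G.actV ((σ (G.actV δ v))⁻¹ * (δ * σ v)) (Quotient.out (Quotient.mk s v)) =
        Quotient.out (Quotient.mk s v) := by
      rw [G.actV_mul, h2]
      nth_rewrite 2 [← h1]
      rw [← G.actV_mul, inv_mul_cancel, G.actV_one]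
    have h4 := G.free_V _ _ h3
    have h5 : σ (G.actV δ v) * ((σ (G.actV δ v))⁻¹ * (δ * σ v)) = σ (G.actV δ v) * 1 := by
      rw [h4]
    rw [mul_one, ← mul_assoc, mul_inv_cancel, one_mul] at h5
    exact h5.symm
  obtain ⟨x₀⟩ := ‹Nonempty X›
  refine ⟨fun v => ρ (σ v) x₀, fun γ v => ?_⟩
  show ρ (σ (G.actV γ v)) x₀ = ρ γ (ρ (σ v) x₀)
  rw [hσmul γ v, hρ.mul_act]

private lemma equiv_mid (hX : IsCATMinusOne X) (G : EquivGraph Γ) {ρ : Γ → X → X}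
    (hρ : IsIsomAction Γ ρ) {F F' : G.V → X} (hF : gEquivMap G ρ F)
    (hF' : gEquivMap G ρ F') :
    gEquivMap G ρ (fun v => midOf hX.1 (F v) (F' v)) := by
  intro γ v
  simp only
  rw [hF, hF']
  exact (midOf_map hX (ρ γ) (hρ.isom γ) (F v) (F' v)).symm

private lemma energy_mid (hX : IsCATMinusOne X) (G : EquivGraph Γ) (F F' : G.V → X) :
    energy G (fun v => midOf hX.1 (F v) (F' v)) ≤ energy G F / 2 + energy G F' / 2 := by
  have hterm : ∀ e ∈ G.E₀,
      dist (midOf hX.1 (F (G.src e)) (F' (G.src e))) (midOf hX.1 (F (G.tgt e)) (F' (G.tgt e))) ^ 2 ≤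
        dist (F (G.src e)) (F (G.tgt e)) ^ 2 / 2 + dist (F' (G.src e)) (F' (G.tgt e)) ^ 2 / 2 := by
    intro e _
    have hq := midOf_quad hX (F (G.src e)) (F' (G.src e)) (F (G.tgt e)) (F' (G.tgt e))
    nlinarith [mul_self_le_mul_self (dist_nonneg :
        (0:ℝ) ≤ dist (midOf hX.1 (F (G.src e)) (F' (G.src e)))
          (midOf hX.1 (F (G.tgt e)) (F' (G.tgt e)))) hq,
      sq_nonneg (dist (F (G.src e)) (F (G.tgt e)) - dist (F' (G.src e)) (F' (G.tgt e)))]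
  calc energy G (fun v => midOf hX.1 (F v) (F' v)) ≤
      ∑ e ∈ G.E₀, (dist (F (G.src e)) (F (G.tgt e)) ^ 2 / 2 +
        dist (F' (G.src e)) (F' (G.tgt e)) ^ 2 / 2) := Finset.sum_le_sum hterm
  _ = energy G F / 2 + energy G F' / 2 := by
      rw [energy, energy, Finset.sum_add_distrib, ← Finset.sum_div, ← Finset.sum_div]

private lemma Dsq_CN (hX : IsCATMinusOne X) (G : EquivGraph Γ) (P F F' : G.V → X) :
    Dsq G P (fun v => midOf hX.1 (F v) (F' v)) ≤
      Dsq G P F / 2 + Dsq G P F' / 2 - Dsq G F F' / 4 := by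
  have hterm : ∀ v ∈ G.V₀,
      dist (P v) (midOf hX.1 (F v) (F' v)) ^ 2 ≤
        dist (P v) (F v) ^ 2 / 2 + dist (P v) (F' v) ^ 2 / 2 - dist (F v) (F' v) ^ 2 / 4 := by
    intro v _
    exact euclidCN hX (P v) (midOf_dist_left hX.1 (F v) (F' v))
      (midOf_dist_right hX.1 (F v) (F' v))
  calc Dsq G P (fun v => midOf hX.1 (F v) (F' v)) ≤
      ∑ v ∈ G.V₀, (dist (P v) (F v) ^ 2 / 2 + dist (P v) (F' v) ^ 2 / 2 -
        dist (F v) (F' v) ^ 2 / 4) := Finset.sum_le_sum hterm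
  _ = Dsq G P F / 2 + Dsq G P F' / 2 - Dsq G F F' / 4 := by
      rw [Dsq, Dsq, Dsq, Finset.sum_sub_distrib, Finset.sum_add_distrib,
        ← Finset.sum_div, ← Finset.sum_div, ← Finset.sum_div]

private lemma Dsq_single (G : EquivGraph Γ) {ρ : Γ → X → X} (hρ : IsIsomAction Γ ρ)
    {F F' : G.V → X} (hF : gEquivMap G ρ F) (hF' : gEquivMap G ρ F') (v : G.V) :
    dist (F v) (F' v) ^ 2 ≤ Dsq G F F' := by
  obtain ⟨γ, w, hw, hwv⟩ := G.fund_V v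
  have : dist (F v) (F' v) = dist (F w) (F' w) := by
    rw [← hwv, hF, hF', (hρ.isom γ).dist_eq]
  rw [this, Dsq]
  exact Finset.single_le_sum (f := fun v => dist (F v) (F' v) ^ 2)
    (fun i _ => sq_nonneg _) hw

end MainAux

/-- If `ρ : Γ → Isom(X)` either fixes a point of `X` or does not act
evanescently, then there exists a harmonic `ρ`-equivariant map `F : Ṽ → X`. -/
theorem statement_1 (g : ℕ) (hg : 2 ≤ g) {X : Type*} [MetricSpace X] [CompleteSpace X]
    [Nonempty X] (hX : IsCATMinusOne X) (ρ : SurfaceGroup g → X → X)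
    (hρ : IsIsomAction (SurfaceGroup g) ρ) (G : EquivGraph (SurfaceGroup g))
    (hfix : (∃ p : X, ∀ γ : SurfaceGroup g, ρ γ p = p) ∨ ¬ Evanescent ρ) :
    ∃ F : G.V → X, Harmonic G ρ F := by
  classical
  rcases isEmpty_or_nonempty G.V with hV | hV
  · haveI : IsEmpty G.E := ⟨fun e => IsEmpty.false (G.src e)⟩
    have hE0 : G.E₀ = ∅ := Finset.eq_empty_of_isEmpty _
    refine ⟨fun v => isEmptyElim v, fun γ v => isEmptyElim v, fun F' _ => ?_⟩
    simp [energy, hE0]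
  rcases hfix with ⟨p, hp⟩ | hNE
  · refine ⟨fun _ => p, fun γ v => (hp γ).symm, fun F' _ => ?_⟩
    have h0 : energy G (fun _ : G.V => p) = 0 := by simp [energy]
    rw [h0]
    exact energy_nonneg G F'
  -- Main case: the action is not evanescent.
  obtain ⟨v₁⟩ := hV
  obtain ⟨g₀, v₀, hv₀, -⟩ := G.fund_V v₁
  obtain ⟨F₀, hF₀⟩ := exists_equiv G hρ
  set ES : Set ℝ := {r | ∃ F : G.V → X, gEquivMap G ρ F ∧ energy G F = r} with hES
  have hESne : ES.Nonempty := ⟨energy G F₀, F₀, hF₀, rfl⟩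
  have hESbdd : BddBelow ES := ⟨0, by rintro r ⟨F, hF, rfl⟩; exact energy_nonneg G F⟩
  set Estar := sInf ES with hEstar
  have hEstar_le : ∀ F : G.V → X, gEquivMap G ρ F → Estar ≤ energy G F :=
    fun F hF => csInf_le hESbdd ⟨F, hF, rfl⟩
  have heps_pos : ∀ k : ℕ, (0:ℝ) < 1/((k:ℝ)+1) := fun k => by positivity
  have heps_mono : ∀ {k l : ℕ}, k ≤ l → (1:ℝ)/((l:ℝ)+1) ≤ 1/((k:ℝ)+1) := by
    intro k l hkl
    apply one_div_le_one_div_of_le (by positivity)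
    have : (k:ℝ) ≤ l := Nat.cast_le.mpr hkl
    linarith
  have heps_le1 : ∀ k : ℕ, (1:ℝ)/((k:ℝ)+1) ≤ 1 := by
    intro k
    rw [div_le_one (by positivity)]
    have : (0:ℝ) ≤ (k:ℝ) := Nat.cast_nonneg k
    linarith
  have hSubne : ∀ k : ℕ, ∃ F : G.V → X,
      gEquivMap G ρ F ∧ energy G F ≤ Estar + 1/((k:ℝ)+1) := by
    intro k
    obtain ⟨r, ⟨F, hF, hFr⟩, hr⟩ := exists_lt_of_csInf_lt hESne
      (lt_add_of_pos_right Estar (heps_pos k))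
    exact ⟨F, hF, by rw [hFr]; exact hr.le⟩
  -- Boundedness of the sublevel set, from non-evanescence.
  have hNEbound : ∃ R : ℝ, ∀ F : G.V → X, gEquivMap G ρ F → energy G F ≤ Estar + 1 →
      ∀ v ∈ G.V₀, dist (F₀ v₀) (F v) ≤ R := by
    by_contra hcon
    push_neg at hcon
    apply hNE
    refine ⟨{x : X | ∃ F : G.V → X, (gEquivMap G ρ F ∧ energy G F ≤ Estar + 1) ∧
      ∃ v ∈ G.V₀, F v = x}, ?_, ?_⟩
    · intro hbdd
      obtain ⟨C, hC⟩ := Metric.isBounded_iff.mp hbdd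
      obtain ⟨F₁, hF₁e, hF₁E⟩ := hSubne 0
      have hF₁E' : energy G F₁ ≤ Estar + 1 := hF₁E.trans (by linarith [heps_le1 0])
      obtain ⟨F, hFe, hFE, v, hv, hgt⟩ := hcon (C + dist (F₀ v₀) (F₁ v₀))
      have hm1 : F₁ v₀ ∈ {x : X | ∃ F : G.V → X,
          (gEquivMap G ρ F ∧ energy G F ≤ Estar + 1) ∧ ∃ v ∈ G.V₀, F v = x} :=
        ⟨F₁, ⟨hF₁e, hF₁E'⟩, v₀, hv₀, rfl⟩
      have hm2 : F v ∈ {x : X | ∃ F : G.V → X,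
          (gEquivMap G ρ F ∧ energy G F ≤ Estar + 1) ∧ ∃ v ∈ G.V₀, F v = x} :=
        ⟨F, ⟨hFe, hFE⟩, v, hv, rfl⟩
      have h3 := hC hm1 hm2
      have h4 := dist_triangle (F₀ v₀) (F₁ v₀) (F v)
      linarith
    · intro K
      choose Lb hLb using fun (v w : G.V) => path_bound G hρ (Estar + 1) v w
      refine ⟨∑ q ∈ G.V₀ ×ˢ K, |Lb q.1 (G.actV q.2 q.1)|, ?_⟩
      rintro x ⟨F, ⟨hFe, hFE⟩, v, hv, rfl⟩ γ hγ
      have h1 : ρ γ (F v) = F (G.actV γ v) := (hFe γ v).symm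
      rw [h1]
      calc dist (F v) (F (G.actV γ v)) ≤ Lb v (G.actV γ v) := hLb v (G.actV γ v) F hFe hFE
      _ ≤ |Lb v (G.actV γ v)| := le_abs_self _
      _ ≤ ∑ q ∈ G.V₀ ×ˢ K, |Lb q.1 (G.actV q.2 q.1)| :=
          Finset.single_le_sum
            (f := fun q : G.V × SurfaceGroup g => |Lb q.1 (G.actV q.2 q.1)|)
            (a := (v, γ))
            (fun q _ => abs_nonneg _) (Finset.mem_product.mpr ⟨hv, hγ⟩)
  obtain ⟨R, hR⟩ := hNEbound
  obtain ⟨P, hPe, hPE⟩ := hSubne 0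
  have hPE' : energy G P ≤ Estar + 1 := hPE.trans (by linarith [heps_le1 0])
  have hR0 : 0 ≤ R := le_trans dist_nonneg (hR P hPe hPE' v₀ hv₀)
  set Q : ℝ := (G.V₀.card : ℝ) * (2*R)^2 with hQ
  have hDQ : ∀ F : G.V → X, gEquivMap G ρ F → energy G F ≤ Estar + 1 → Dsq G P F ≤ Q := by
    intro F hFe hFE
    have hterm : ∀ v ∈ G.V₀, dist (P v) (F v) ^ 2 ≤ (2*R)^2 := by
      intro v hv
      have h1 := hR P hPe hPE' v hv
      have h2 := hR F hFe hFE v hv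
      have h3 : dist (P v) (F v) ≤ 2*R := by
        have h4 := dist_triangle (P v) (F₀ v₀) (F v)
        rw [dist_comm (P v) (F₀ v₀)] at h4
        linarith
      exact pow_le_pow_left₀ dist_nonneg h3 2
    calc Dsq G P F ≤ ∑ _v ∈ G.V₀, (2*R)^2 := Finset.sum_le_sum hterm
    _ = Q := by rw [Finset.sum_const, nsmul_eq_mul, hQ]
  set TS : ℕ → Set ℝ := fun k => {d : ℝ | ∃ F : G.V → X,
    (gEquivMap G ρ F ∧ energy G F ≤ Estar + 1/((k:ℝ)+1)) ∧ Dsq G P F = d} with hTSdef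
  have hTSne : ∀ k, (TS k).Nonempty := by
    intro k
    obtain ⟨F, h1, h2⟩ := hSubne k
    exact ⟨Dsq G P F, F, ⟨h1, h2⟩, rfl⟩
  have hTSbdd : ∀ k, BddBelow (TS k) :=
    fun k => ⟨0, by rintro d ⟨F, hF, rfl⟩; exact Dsq_nonneg G P F⟩
  set rk : ℕ → ℝ := fun k => sInf (TS k) with hrkdef
  have hrk_mono : Monotone rk := by
    intro k l hkl
    apply csInf_le_csInf (hTSbdd k) (hTSne l)
    rintro d ⟨F, ⟨h1, h2⟩, rfl⟩
    exact ⟨F, ⟨h1, h2.trans (by linarith [heps_mono hkl])⟩, rfl⟩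
  have hxk : ∀ k : ℕ, ∃ F : G.V → X,
      (gEquivMap G ρ F ∧ energy G F ≤ Estar + 1/((k:ℝ)+1)) ∧
        Dsq G P F ≤ rk k + 1/((k:ℝ)+1) := by
    intro k
    obtain ⟨d, ⟨F, hF, hFd⟩, hd⟩ := exists_lt_of_csInf_lt (hTSne k)
      (lt_add_of_pos_right (rk k) (heps_pos k))
    exact ⟨F, hF, by rw [hFd]; exact hd.le⟩
  choose xk hxkmem hxkD using hxk
  have hxke : ∀ k, gEquivMap G ρ (xk k) := fun k => (hxkmem k).1
  have hxkE : ∀ k, energy G (xk k) ≤ Estar + 1/((k:ℝ)+1) := fun k => (hxkmem k).2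
  have hxkE' : ∀ k, energy G (xk k) ≤ Estar + 1 :=
    fun k => (hxkE k).trans (by linarith [heps_le1 k])
  have hrk_leQ : ∀ k, rk k ≤ Q := fun k =>
    (csInf_le (hTSbdd k) ⟨xk k, hxkmem k, rfl⟩).trans (hDQ (xk k) (hxke k) (hxkE' k))
  have hbddAbove : BddAbove (Set.range rk) := ⟨Q, by rintro _ ⟨k, rfl⟩; exact hrk_leQ k⟩
  set rinf := ⨆ k, rk k with hrinfdef
  have hrk_tendsto : Filter.Tendsto rk Filter.atTop (nhds rinf) :=
    tendsto_atTop_ciSup hrk_mono hbddAbove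
  have hrk_le_rinf : ∀ k, rk k ≤ rinf := fun k => le_ciSup hbddAbove k
  have hkey : ∀ k l : ℕ, k ≤ l → Dsq G (xk k) (xk l) ≤
      2*(rk l - rk k) + 2*(1/((k:ℝ)+1)) + 2*(1/((l:ℝ)+1)) := by
    intro k l hkl
    have hHe := equiv_mid hX G hρ (hxke k) (hxke l)
    have hHE : energy G (fun v => midOf hX.1 (xk k v) (xk l v)) ≤ Estar + 1/((k:ℝ)+1) := by
      have h1 := energy_mid hX G (xk k) (xk l)
      have h2 := hxkE k
      have h3 := hxkE l
      have h4 := heps_mono hkl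
      linarith
    have hge : rk k ≤ Dsq G P (fun v => midOf hX.1 (xk k v) (xk l v)) :=
      csInf_le (hTSbdd k) ⟨_, ⟨hHe, hHE⟩, rfl⟩
    have hCN := Dsq_CN hX G P (xk k) (xk l)
    have e1 := hxkD k
    have e2 := hxkD l
    linarith
  set bseq : ℕ → ℝ := fun N => Real.sqrt (2*(rinf - rk N) + 4*(1/((N:ℝ)+1))) with hbseqdef
  have hb0 : Filter.Tendsto bseq Filter.atTop (nhds 0) := by
    have h1 : Filter.Tendsto (fun N : ℕ => 2*(rinf - rk N) + 4*(1/((N:ℝ)+1)))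
        Filter.atTop (nhds (2*(rinf - rinf) + 4*0)) :=
      ((tendsto_const_nhds.sub hrk_tendsto).const_mul 2).add
        (tendsto_one_div_add_atTop_nhds_zero_nat.const_mul 4)
    rw [show 2*(rinf - rinf) + 4*(0:ℝ) = 0 by ring] at h1
    have h2 := (Real.continuous_sqrt.tendsto' 0 0 Real.sqrt_zero).comp h1
    exact h2
  have hDbound : ∀ (N n m : ℕ), N ≤ n → N ≤ m →
      Dsq G (xk n) (xk m) ≤ 2*(rinf - rk N) + 4*(1/((N:ℝ)+1)) := by
    intro N n m hn hm
    rcases le_total n m with h | h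
    · have h0 := hkey n m h
      have h1 := hrk_le_rinf m
      have h2 := hrk_mono hn
      have h3 := heps_mono hn
      have h4 := heps_mono hm
      linarith
    · have h0 := hkey m n h
      have hsymm : Dsq G (xk n) (xk m) = Dsq G (xk m) (xk n) := by
        rw [Dsq, Dsq]
        exact Finset.sum_congr rfl fun v _ => by rw [dist_comm]
      rw [hsymm]
      have h1 := hrk_le_rinf n
      have h2 := hrk_mono hm
      have h3 := heps_mono hn
      have h4 := heps_mono hm
      linarith
  have hcauchy : ∀ v : G.V, CauchySeq fun k => xk k v := by
    intro v
    apply cauchySeq_of_le_tendsto_0 bseq ?_ hb0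
    intro n m N hn hm
    apply Real.le_sqrt_of_sq_le
    calc dist (xk n v) (xk m v) ^ 2 ≤ Dsq G (xk n) (xk m) :=
        Dsq_single G hρ (hxke n) (hxke m) v
    _ ≤ 2*(rinf - rk N) + 4*(1/((N:ℝ)+1)) := hDbound N n m hn hm
  have hlim : ∀ v : G.V, ∃ x : X,
      Filter.Tendsto (fun k => xk k v) Filter.atTop (nhds x) :=
    fun v => cauchySeq_tendsto_of_complete (hcauchy v)
  choose Fs hFs using hlim
  have hFse : gEquivMap G ρ Fs := by
    intro γ v
    have h1 := hFs (G.actV γ v)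
    have h2 : Filter.Tendsto (fun k => xk k (G.actV γ v)) Filter.atTop
        (nhds (ρ γ (Fs v))) := by
      have he : (fun k => xk k (G.actV γ v)) = fun k => ρ γ (xk k v) :=
        funext fun k => hxke k γ v
      rw [he]
      exact ((hρ.isom γ).continuous.tendsto (Fs v)).comp (hFs v)
    exact tendsto_nhds_unique h1 h2
  have hElim : Filter.Tendsto (fun k => energy G (xk k)) Filter.atTop
      (nhds (energy G Fs)) := by
    show Filter.Tendsto
      (fun k => ∑ e ∈ G.E₀, dist (xk k (G.src e)) (xk k (G.tgt e)) ^ 2)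
      Filter.atTop (nhds (∑ e ∈ G.E₀, dist (Fs (G.src e)) (Fs (G.tgt e)) ^ 2))
    apply tendsto_finset_sum
    intro e _
    exact ((hFs (G.src e)).dist (hFs (G.tgt e))).pow 2
  have hfinal : energy G Fs ≤ Estar := by
    have h2 : Filter.Tendsto (fun k : ℕ => Estar + 1/((k:ℝ)+1)) Filter.atTop
        (nhds (Estar + 0)) :=
      tendsto_const_nhds.add tendsto_one_div_add_atTop_nhds_zero_nat
    rw [add_zero] at h2
    exact le_of_tendsto_of_tendsto' hElim h2 hxkE
  exact ⟨Fs, hFse, fun F' hF' => hfinal.trans (hEstar_le F' hF')⟩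

end DomCAT
end
end

section
/- Let X be a complete CAT(−1) metric space and ρ: Γ → Isom(X) a homomorphism. Suppose (F_n) is a sequence of ρ-equivariant maps Ṽ → X with bounded energy (sup_n E(F_n) < ∞) such that for some vertex v ∈ Ṽ the sequence (F_n(v)) is unbounded in X. Then the action of Γ on X via ρ is evanescent. (This uses the estimate d(F(u),F(w)) ≤ √(E(F)) · d_graph(u,w) for every ρ-equivariant map F and all vertices u,w ∈ Ṽ, where d_graph is the graph metric on the 1-skeleton of T̃.) -/
open Real Set

noncomputable section

namespace DomCAT

/-- If a sequence of `ρ`-equivariant maps has bounded energy but is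
unbounded at some vertex, then the action of `Γ` on `X` via `ρ` is evanescent. -/
theorem statement_2 (g : ℕ) (hg : 2 ≤ g) {X : Type*} [MetricSpace X] [CompleteSpace X]
    (hX : IsCATMinusOne X) (ρ : SurfaceGroup g → X → X)
    (hρ : IsIsomAction (SurfaceGroup g) ρ) (G : EquivGraph (SurfaceGroup g))
    (F : ℕ → G.V → X) (hF : ∀ n, gEquivMap G ρ (F n))
    (B : ℝ) (hB : ∀ n, energy G (F n) ≤ B)
    (v : G.V) (hv : ¬ Bornology.IsBounded (Set.range fun n => F n v)) :
    Evanescent ρ := by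
  -- Every edge in the fundamental domain has length ≤ √B.
  have hB0 : ∀ n, ∀ e ∈ G.E₀, dist (F n (G.src e)) (F n (G.tgt e)) ≤ Real.sqrt B := by
    intro n e he
    have h1 : dist (F n (G.src e)) (F n (G.tgt e)) ^ 2 ≤ B :=
      le_trans (Finset.single_le_sum
        (f := fun e => dist (F n (G.src e)) (F n (G.tgt e)) ^ 2)
        (fun i _ => sq_nonneg _) he) (hB n)
    calc dist (F n (G.src e)) (F n (G.tgt e))
        = Real.sqrt (dist (F n (G.src e)) (F n (G.tgt e)) ^ 2) :=
          (Real.sqrt_sq dist_nonneg).symm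
      _ ≤ Real.sqrt B := Real.sqrt_le_sqrt h1
  -- Hence every edge has length ≤ √B, by equivariance.
  have hedge : ∀ n e, dist (F n (G.src e)) (F n (G.tgt e)) ≤ Real.sqrt B := by
    intro n e
    obtain ⟨γ, e₀, he₀, rfl⟩ := G.fund_E e
    rw [G.src_act, G.tgt_act, hF n γ, hF n γ, (hρ.isom γ).dist_eq]
    exact hB0 n e₀ he₀
  -- Uniform bound along any pair of vertices, by connectivity.
  have hpath : ∀ a b : G.V, ∃ C, ∀ n, dist (F n a) (F n b) ≤ C := by
    intro a b
    have h := G.conn a b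
    induction h with
    | refl => exact ⟨0, fun n => by simp⟩
    | @tail m c h step ih =>
      obtain ⟨C, hC⟩ := ih
      obtain ⟨e, he⟩ := step
      refine ⟨C + Real.sqrt B, fun n => ?_⟩
      have hd : dist (F n m) (F n c) ≤ Real.sqrt B := by
        rcases he with ⟨h1, h2⟩ | ⟨h1, h2⟩
        · rw [← h1, ← h2]; exact hedge n e
        · rw [← h1, ← h2, dist_comm]; exact hedge n e
      calc dist (F n a) (F n c) ≤ dist (F n a) (F n m) + dist (F n m) (F n c) :=
            dist_triangle _ _ _
        _ ≤ C + Real.sqrt B := add_le_add (hC n) hd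
  refine ⟨Set.range (fun n => F n v), hv, ?_⟩
  intro K
  have hc : ∀ γ : SurfaceGroup g, ∃ C, ∀ n, dist (F n v) (ρ γ (F n v)) ≤ C := by
    intro γ
    obtain ⟨C, hC⟩ := hpath v (G.actV γ v)
    exact ⟨C, fun n => by rw [← hF n γ v]; exact hC n⟩
  choose c hc' using hc
  refine ⟨∑ δ ∈ K, |c δ|, ?_⟩
  rintro x ⟨n, rfl⟩ γ hγ
  calc dist (F n v) (ρ γ (F n v)) ≤ c γ := hc' γ n
    _ ≤ |c γ| := le_abs_self _
    _ ≤ ∑ δ ∈ K, |c δ| := Finset.single_le_sum (f := fun δ => |c δ|) (fun i _ => abs_nonneg _) hγ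

end DomCAT
end
end

section
/- Let Σ be a CAT(1) metric space and σ a closed geodesic polygon in Σ of total length strictly less than 2π. Then the radius of σ is strictly less than π/2: there exist a point v ∈ Σ and r < π/2 such that d(v,p) ≤ r for every point p of σ. -/
open Real Set

noncomputable section

namespace DomCAT

/-! ### Auxiliary lemmas for Statement 4 -/

private lemma arccos_le_of_cos_le' {x y : ℝ} (h0 : 0 ≤ y) (hpi : y ≤ π)
    (h : Real.cos y ≤ x) : Real.arccos x ≤ y := by
  have h1 : Real.arcsin (Real.cos y) ≤ Real.arcsin x := Real.monotone_arcsin h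
  have h2 : Real.arccos (Real.cos y) = y := Real.arccos_cos h0 hpi
  rw [Real.arccos] at h2 ⊢
  linarith

private lemma sph_mid_bound (L dp dq e : ℝ) (hL : L < 2 * π)
    (hdp : 0 ≤ dp) (hdq : 0 ≤ dq) (he0 : 0 ≤ e) (heL : e ≤ L / 2)
    (hsum : dp + dq ≤ L / 2) (htri : |dp - dq| ≤ e) :
    sphCompDist dq dp e dp (e / 2) ≤ L / 4 := by
  have hpi := Real.pi_pos
  have hL0 : 0 ≤ L := by linarith
  have hL4 : L / 4 < π / 2 := by linarith
  have hcosL4 : 0 ≤ Real.cos (L / 4) :=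
    Real.cos_nonneg_of_mem_Icc ⟨by linarith, by linarith⟩
  rw [sphCompDist]
  apply arccos_le_of_cos_le' (by linarith) (by linarith)
  by_cases hsd : Real.sin dp = 0
  · have hdp0 : dp = 0 := by
      rw [Real.sin_eq_zero_iff_of_lt_of_lt (by linarith) (by linarith)] at hsd
      exact hsd
    rw [hdp0]
    simp only [Real.cos_zero, Real.sin_zero, one_mul, zero_mul, add_zero]
    exact Real.cos_le_cos_of_nonneg_of_le_pi (by linarith) (by linarith) (by linarith)
  by_cases hse : Real.sin e = 0
  · have he0' : e = 0 := by
      rw [Real.sin_eq_zero_iff_of_lt_of_lt (by linarith) (by linarith)] at hse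
      exact hse
    have hdpq : dp = dq := by
      rw [he0'] at htri
      have := abs_nonneg (dp - dq)
      have h1 : |dp - dq| = 0 := le_antisymm htri this
      have := abs_eq_zero.mp h1
      linarith
    rw [he0']
    norm_num
    exact Real.cos_le_cos_of_nonneg_of_le_pi hdp (by linarith) (by linarith)
  -- main case
  have hepos : 0 < e := lt_of_le_of_ne he0 fun h => hse (by rw [← h, Real.sin_zero])
  have hepi : e < π := by linarith
  have hce2 : 0 < Real.cos (e / 2) :=
    Real.cos_pos_of_mem_Ioo ⟨by linarith, by linarith⟩
  have hse2 : 0 < Real.sin (e / 2) :=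
    Real.sin_pos_of_pos_of_lt_pi (by linarith) (by linarith)
  have h1 : Real.sin e = 2 * Real.sin (e / 2) * Real.cos (e / 2) := by
    have := Real.sin_two_mul (e / 2)
    rw [show 2 * (e / 2) = e by ring] at this
    linarith
  have h2 : Real.cos e = 2 * Real.cos (e / 2) ^ 2 - 1 := by
    have := Real.cos_two_mul (e / 2)
    rw [show 2 * (e / 2) = e by ring] at this
    linarith
  have hX : Real.cos dp * Real.cos (e / 2) +
      Real.sin dp * Real.sin (e / 2) * sphAngleCos dq dp e
      = (Real.cos dp + Real.cos dq) / (2 * Real.cos (e / 2)) := by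
    rw [sphAngleCos, h1, h2]
    field_simp
    ring
  rw [hX, Real.cos_add_cos, le_div_iff₀ (by positivity)]
  have hA : Real.cos (L / 4) ≤ Real.cos ((dp + dq) / 2) :=
    Real.cos_le_cos_of_nonneg_of_le_pi (by linarith) (by linarith) (by linarith)
  have hB : Real.cos (e / 2) ≤ Real.cos ((dp - dq) / 2) := by
    rw [← Real.cos_abs ((dp - dq) / 2)]
    apply Real.cos_le_cos_of_nonneg_of_le_pi (abs_nonneg _) (by linarith)
    rw [abs_div]
    simp only [abs_two]
    linarith [htri, abs_nonneg (dp - dq)]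
  nlinarith [hA, hB, hce2, hcosL4]


open Fin.NatCast

private def pS {W : Type*} [MetricSpace W] {n : ℕ} (x : Fin (n + 1) → W) (m : ℕ) : ℝ :=
  ∑ j ∈ Finset.range m, dist (x (j : Fin (n + 1))) (x ((j : Fin (n + 1)) + 1))

private lemma pS_zero {W : Type*} [MetricSpace W] {n : ℕ} (x : Fin (n + 1) → W) :
    pS x 0 = 0 := Finset.sum_range_zero _

private lemma pS_succ {W : Type*} [MetricSpace W] {n : ℕ} (x : Fin (n + 1) → W) (m : ℕ) :
    pS x (m + 1) = pS x m + dist (x (m : Fin (n + 1))) (x ((m : Fin (n + 1)) + 1)) :=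
  Finset.sum_range_succ _ m

private lemma pS_nonneg {W : Type*} [MetricSpace W] {n : ℕ} (x : Fin (n + 1) → W) (m : ℕ) :
    0 ≤ pS x m := Finset.sum_nonneg fun _ _ => dist_nonneg

private lemma pS_mono {W : Type*} [MetricSpace W] {n : ℕ} (x : Fin (n + 1) → W)
    {a b : ℕ} (h : a ≤ b) : pS x a ≤ pS x b :=
  Finset.sum_le_sum_of_subset_of_nonneg (Finset.range_subset_range.2 h) fun _ _ _ => dist_nonneg

private lemma dist_le_pS {W : Type*} [MetricSpace W] {n : ℕ} (x : Fin (n + 1) → W)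
    (a b : ℕ) (hab : a ≤ b) :
    dist (x (a : Fin (n + 1))) (x (b : Fin (n + 1))) ≤ pS x b - pS x a := by
  induction b, hab using Nat.le_induction with
  | base => simp
  | succ b hab ih =>
    have h1 := dist_triangle (x (a : Fin (n + 1))) (x (b : Fin (n + 1)))
      (x ((b + 1 : ℕ) : Fin (n + 1)))
    have h2 : dist (x ((b : ℕ) : Fin (n + 1))) (x ((b + 1 : ℕ) : Fin (n + 1)))
        = dist (x (b : Fin (n + 1))) (x ((b : Fin (n + 1)) + 1)) := by
      rw [Nat.cast_add_one]
    rw [pS_succ]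
    rw [h2] at h1
    linarith

/-- A closed geodesic polygon of length `< 2π` in a CAT(1) space has
radius `< π/2`. -/
theorem statement_4 {W : Type*} [MetricSpace W] (hW : IsCATOne W)
    (n : ℕ) (x : Fin (n + 1) → W) (γ : Fin (n + 1) → ℝ → W)
    (hgeo : ∀ i, IsGeodesicParam (γ i) (x i) (x (i + 1)))
    (hlen : ∑ i, dist (x i) (x (i + 1)) < 2 * π) :
    ∃ v : W, ∃ r : ℝ, r < π / 2 ∧
      ∀ i, ∀ s ∈ Set.Icc (0 : ℝ) (dist (x i) (x (i + 1))), dist v (γ i s) ≤ r := by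
  classical
  obtain ⟨hgeod, hcomp⟩ := hW
  have hpi := Real.pi_pos
  have hLsum : pS x (n + 1) = ∑ i, dist (x i) (x (i + 1)) := by
    rw [pS, ← Fin.sum_univ_eq_sum_range
      (fun j => dist (x (j : Fin (n + 1))) (x ((j : Fin (n + 1)) + 1))) (n + 1)]
    exact Finset.sum_congr rfl fun i _ => by rw [Fin.cast_val_eq_self]
  have hL2 : pS x (n + 1) < 2 * π := by rw [hLsum]; exact hlen
  have hL0 : 0 ≤ pS x (n + 1) := pS_nonneg x (n + 1)
  -- basic facts about the geodesic sides
  have hxseg : ∀ m : ℕ, ∀ s, 0 ≤ s → s ≤ dist (x (m : Fin (n + 1))) (x ((m : Fin (n + 1)) + 1)) →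
      dist (x (m : Fin (n + 1))) (γ (m : Fin (n + 1)) s) = s := by
    intro m s h0 h1
    obtain ⟨e0, e1, ep⟩ := hgeo (m : Fin (n + 1))
    have := ep 0 ⟨le_refl 0, dist_nonneg⟩ s ⟨h0, h1⟩
    rw [e0] at this
    simpa [abs_of_nonneg h0] using this
  have hyseg : ∀ m : ℕ, ∀ s, 0 ≤ s → s ≤ dist (x (m : Fin (n + 1))) (x ((m : Fin (n + 1)) + 1)) →
      dist (γ (m : Fin (n + 1)) s) (x ((m : Fin (n + 1)) + 1))
        = dist (x (m : Fin (n + 1))) (x ((m : Fin (n + 1)) + 1)) - s := by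
    intro m s h0 h1
    obtain ⟨e0, e1, ep⟩ := hgeo (m : Fin (n + 1))
    have := ep s ⟨h0, h1⟩ (dist (x (m : Fin (n + 1))) (x ((m : Fin (n + 1)) + 1)))
      ⟨dist_nonneg, le_refl _⟩
    rw [e1] at this
    rw [this, abs_of_nonpos (by linarith)]
    ring
  have hfwd : ∀ m : ℕ, ∀ s, 0 ≤ s →
      s ≤ dist (x (m : Fin (n + 1))) (x ((m : Fin (n + 1)) + 1)) →
      dist (x 0) (γ (m : Fin (n + 1)) s) ≤ pS x m + s := by
    intro m s h0 h1
    have h2 := dist_le_pS x 0 m (Nat.zero_le m)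
    have h3 := hxseg m s h0 h1
    have h4 := dist_triangle (x ((0 : ℕ) : Fin (n + 1))) (x (m : Fin (n + 1)))
      (γ (m : Fin (n + 1)) s)
    rw [Nat.cast_zero] at h4
    rw [pS_zero] at h2
    rw [Nat.cast_zero] at h2
    linarith
  have hbwd : ∀ m : ℕ, m ≤ n → ∀ s, 0 ≤ s →
      s ≤ dist (x (m : Fin (n + 1))) (x ((m : Fin (n + 1)) + 1)) →
      dist (γ (m : Fin (n + 1)) s) (x 0) ≤ pS x (n + 1) - (pS x m + s) := by
    intro m hm s h0 h1
    have h2 := dist_le_pS x (m + 1) (n + 1) (by omega)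
    have h3 := hyseg m s h0 h1
    have h4 := dist_triangle (γ (m : Fin (n + 1)) s) (x ((m + 1 : ℕ) : Fin (n + 1)))
      (x ((n + 1 : ℕ) : Fin (n + 1)))
    rw [Fin.natCast_self] at h4
    have h5 : x ((m + 1 : ℕ) : Fin (n + 1)) = x ((m : Fin (n + 1)) + 1) := by
      rw [Nat.cast_add_one]
    rw [h5, Fin.natCast_self] at h2
    rw [h5] at h4
    have h6 := pS_succ x m
    linarith
  -- choice of the bisection point
  obtain ⟨k, hk_le, hk1, hk2⟩ :
      ∃ k, k ≤ n ∧ pS x k ≤ pS x (n + 1) / 2 ∧ pS x (n + 1) / 2 ≤ pS x (k + 1) := by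
    refine ⟨Nat.findGreatest (fun m => pS x m ≤ pS x (n + 1) / 2) n,
      Nat.findGreatest_le n, ?_, ?_⟩
    · exact Nat.findGreatest_spec (P := fun m => pS x m ≤ pS x (n + 1) / 2)
        (Nat.zero_le n) (by simp only [pS_zero]; linarith)
    · by_cases hkn : Nat.findGreatest (fun m => pS x m ≤ pS x (n + 1) / 2) n = n
      · rw [hkn]; linarith
      · have hlt : Nat.findGreatest (fun m => pS x m ≤ pS x (n + 1) / 2) n < n :=
          lt_of_le_of_ne (Nat.findGreatest_le n) hkn
        have := Nat.findGreatest_is_greatest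
          (Nat.lt_succ_self (Nat.findGreatest (fun m => pS x m ≤ pS x (n + 1) / 2) n))
          (by omega)
        simp only [not_le] at this
        linarith
  obtain ⟨τ, hτdef⟩ : ∃ τ : ℝ, τ = pS x (n + 1) / 2 - pS x k := ⟨_, rfl⟩
  have hτ0 : 0 ≤ τ := by rw [hτdef]; linarith
  have hτD : τ ≤ dist (x (k : Fin (n + 1))) (x ((k : Fin (n + 1)) + 1)) := by
    have := pS_succ x k
    rw [hτdef]; linarith
  have hpq : dist (x 0) (γ (k : Fin (n + 1)) τ) ≤ pS x (n + 1) / 2 := by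
    have := hfwd k τ hτ0 hτD
    linarith [hτdef]
  obtain ⟨δ, hδ⟩ := hgeod (x 0) (γ (k : Fin (n + 1)) τ) (by linarith)
  refine ⟨δ (dist (x 0) (γ (k : Fin (n + 1)) τ) / 2), pS x (n + 1) / 4, by linarith, ?_⟩
  intro i s hs
  obtain ⟨hs0, hs1⟩ := hs
  have hi : (((i : ℕ)) : Fin (n + 1)) = i := Fin.cast_val_eq_self i
  rw [← hi] at hs1 ⊢
  have hm : (i : ℕ) ≤ n := Nat.lt_succ_iff.mp i.isLt
  obtain ⟨a, b, ha0, hb0, hab, hpa, hqb⟩ :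
      ∃ a b : ℝ, 0 ≤ a ∧ 0 ≤ b ∧ a + b = pS x (n + 1) / 2 ∧
        dist (x 0) (γ (((i : ℕ)) : Fin (n + 1)) s) ≤ a ∧
        dist (γ (((i : ℕ)) : Fin (n + 1)) s) (γ (k : Fin (n + 1)) τ) ≤ b := by
    rcases lt_trichotomy (i : ℕ) k with hmk | hmk | hmk
    · refine ⟨pS x (i : ℕ) + s, pS x (n + 1) / 2 - (pS x (i : ℕ) + s),
        by linarith [pS_nonneg x (i : ℕ)], ?_, by ring, hfwd _ s hs0 hs1, ?_⟩
      · have h1 := pS_mono x (show (i : ℕ) + 1 ≤ k by omega)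
        have h2 := pS_succ x (i : ℕ)
        linarith
      · have e1 := hyseg (i : ℕ) s hs0 hs1
        have e2 : x ((((i : ℕ)) : Fin (n + 1)) + 1) = x (((i : ℕ) + 1 : ℕ) : Fin (n + 1)) := by
          rw [Nat.cast_add_one]
        have e3 := dist_le_pS x ((i : ℕ) + 1) k (by omega)
        have e4 := hxseg k τ hτ0 hτD
        have e5 := dist_triangle4 (γ (((i : ℕ)) : Fin (n + 1)) s)
          (x ((((i : ℕ)) : Fin (n + 1)) + 1)) (x (k : Fin (n + 1))) (γ (k : Fin (n + 1)) τ)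
        rw [e2] at e5 e1
        have e6 := pS_succ x (i : ℕ)
        have e7 : dist (x (((i : ℕ)) : Fin (n + 1))) (x (((i : ℕ) + 1 : ℕ) : Fin (n + 1)))
            = dist (x (((i : ℕ)) : Fin (n + 1))) (x ((((i : ℕ)) : Fin (n + 1)) + 1)) := by
          rw [← e2]
        linarith [hτdef]
    · have hs1' : s ≤ dist (x (k : Fin (n + 1))) (x ((k : Fin (n + 1)) + 1)) := by
        rw [← hmk]; exact hs1
      have hwq : dist (γ (k : Fin (n + 1)) s) (γ (k : Fin (n + 1)) τ) = |s - τ| :=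
        (hgeo (k : Fin (n + 1))).2.2 s ⟨hs0, hs1'⟩ τ ⟨hτ0, hτD⟩
      rw [hmk]
      rcases le_total s τ with hst | hst
      · refine ⟨pS x k + s, τ - s, by linarith [pS_nonneg x k], by linarith,
          by rw [hτdef]; ring, hfwd k s hs0 hs1', ?_⟩
        rw [hwq, abs_of_nonpos (by linarith)]
        linarith
      · refine ⟨pS x (n + 1) - (pS x k + s), s - τ, ?_, by linarith,
          by rw [hτdef]; ring, ?_, ?_⟩
        · have h1 := pS_succ x k
          have h2 := pS_mono x (show k + 1 ≤ n + 1 by omega)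
          linarith
        · rw [dist_comm]
          exact hbwd k hk_le s hs0 hs1'
        · rw [hwq, abs_of_nonneg (by linarith)]
      -- case k < m
    · refine ⟨pS x (n + 1) - (pS x (i : ℕ) + s), (pS x (i : ℕ) + s) - pS x (n + 1) / 2,
        ?_, ?_, by ring, ?_, ?_⟩
      · have h1 := pS_succ x (i : ℕ)
        have h2 := pS_mono x (show (i : ℕ) + 1 ≤ n + 1 by omega)
        linarith
      · have h1 := pS_succ x k
        have h2 := pS_mono x (show k + 1 ≤ (i : ℕ) by omega)
        rw [hτdef] at hτD
        linarith
      · rw [dist_comm]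
        exact hbwd (i : ℕ) hm s hs0 hs1
      · have e1 := hyseg k τ hτ0 hτD
        have e2 : x ((k : Fin (n + 1)) + 1) = x ((k + 1 : ℕ) : Fin (n + 1)) := by
          rw [Nat.cast_add_one]
        have e3 := dist_le_pS x (k + 1) (i : ℕ) (by omega)
        have e4 := hxseg (i : ℕ) s hs0 hs1
        have e5 := dist_triangle4 (γ (k : Fin (n + 1)) τ) (x ((k : Fin (n + 1)) + 1))
          (x (((i : ℕ)) : Fin (n + 1))) (γ (((i : ℕ)) : Fin (n + 1)) s)
        rw [e2] at e5 e1
        have e6 := pS_succ x k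
        have e7 : dist (x (k : Fin (n + 1))) (x ((k + 1 : ℕ) : Fin (n + 1)))
            = dist (x (k : Fin (n + 1))) (x ((k : Fin (n + 1)) + 1)) := by
          rw [← e2]
        rw [dist_comm (γ (((i : ℕ)) : Fin (n + 1)) s) (γ (k : Fin (n + 1)) τ)]
        linarith [hτdef]
  -- apply the CAT(1) comparison
  have haL : a ≤ pS x (n + 1) / 2 := by linarith
  obtain ⟨η, hη⟩ := hgeod (x 0) (γ (((i : ℕ)) : Fin (n + 1)) s) (by linarith)
  have hcat := hcomp (x 0) (γ (((i : ℕ)) : Fin (n + 1)) s) (γ (k : Fin (n + 1)) τ) η δ hη hδ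
    (by
      rw [dist_comm (γ (k : Fin (n + 1)) τ) (x 0)]
      linarith)
    (dist (x 0) (γ (((i : ℕ)) : Fin (n + 1)) s)) ⟨dist_nonneg, le_refl _⟩
    (dist (x 0) (γ (k : Fin (n + 1)) τ) / 2) ⟨by positivity, by linarith [(dist_nonneg : (0:ℝ) ≤ dist (x 0) (γ (k : Fin (n + 1)) τ))]⟩
  rw [hη.2.1] at hcat
  have htri : |dist (x 0) (γ (((i : ℕ)) : Fin (n + 1)) s)
      - dist (γ (((i : ℕ)) : Fin (n + 1)) s) (γ (k : Fin (n + 1)) τ)|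
      ≤ dist (x 0) (γ (k : Fin (n + 1)) τ) := by
    have := abs_dist_sub_le (x 0) (γ (k : Fin (n + 1)) τ) (γ (((i : ℕ)) : Fin (n + 1)) s)
    rw [dist_comm (γ (k : Fin (n + 1)) τ) (γ (((i : ℕ)) : Fin (n + 1)) s)] at this
    exact this
  have hkey := sph_mid_bound (pS x (n + 1)) (dist (x 0) (γ (((i : ℕ)) : Fin (n + 1)) s))
    (dist (γ (((i : ℕ)) : Fin (n + 1)) s) (γ (k : Fin (n + 1)) τ))
    (dist (x 0) (γ (k : Fin (n + 1)) τ)) hL2 dist_nonneg dist_nonneg dist_nonneg hpq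
    (by linarith) htri
  rw [dist_comm]
  exact le_trans hcat hkey


end DomCAT
end
end

section
/- Let Σ be a CAT(1) metric space and p₁, p₂, p₃ ∈ Σ with d(p₁,p₂) > 0, d(p₂,p₃) > 0, and Alexandrov angle α = ∠_{p₂}(p₁,p₃) < π. For ε > 0 small, let q_{1,ε} ∈ [p₂ p₁] and q_{3,ε} ∈ [p₂ p₃] be the points at distance ε from p₂, and let p_{2,ε} be the midpoint of the geodesic [q_{1,ε} q_{3,ε}]. Then d(p₂, p_{2,ε}) ≤ 2ε (so p_{2,ε} → p₂ as ε → 0), and there exists a constant δ = δ(α) > 0 such that for all sufficiently small ε > 0, d(p₁, p_{2,ε}) ≤ d(p₁,p₂) − δε and d(p₃, p_{2,ε}) ≤ d(p₃,p₂) − δε; in particular d(p₁,p_{2,ε}) + d(p_{2,ε},p₃) < d(p₁,p₂) + d(p₂,p₃). -/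
open Real Set

noncomputable section

namespace DomCAT

set_option maxHeartbeats 1000000 in
/-- Shortcutting an angle in a CAT(1) space: if `α = ∠_{p₂}(p₁,p₃) < π`,
and `p_{2,ε}` is the midpoint of the segment joining the points at distance `ε` from `p₂`
on `[p₂p₁]` and `[p₂p₃]`, then `d(p₂,p_{2,ε}) ≤ 2ε` and for some `δ > 0` and all small
`ε`, `d(p₁,p_{2,ε}) ≤ d(p₁,p₂) - δε` and `d(p₃,p_{2,ε}) ≤ d(p₃,p₂) - δε`; in particular
`d(p₁,p_{2,ε}) + d(p_{2,ε},p₃) < d(p₁,p₂) + d(p₂,p₃)`. -/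
theorem statement_13 {W : Type*} [MetricSpace W] (hW : IsCATOne W)
    (p₁ p₂ p₃ : W) (h12 : 0 < dist p₂ p₁) (h23 : 0 < dist p₂ p₃)
    (γ₁ γ₃ : ℝ → W) (hγ₁ : IsGeodesicParam γ₁ p₂ p₁) (hγ₃ : IsGeodesicParam γ₃ p₂ p₃)
    (α : ℝ) (hα : HasAngleAt γ₁ γ₃ α) (hαπ : α < π) :
    ∃ δ : ℝ, 0 < δ ∧ ∃ ε₀ : ℝ, 0 < ε₀ ∧ ∀ ε : ℝ, 0 < ε → ε < ε₀ →
      ∀ m : W, dist (γ₁ ε) m = dist (γ₁ ε) (γ₃ ε) / 2 →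
        dist m (γ₃ ε) = dist (γ₁ ε) (γ₃ ε) / 2 →
        dist p₂ m ≤ 2 * ε ∧
        dist p₁ m ≤ dist p₁ p₂ - δ * ε ∧
        dist p₃ m ≤ dist p₃ p₂ - δ * ε ∧
        dist p₁ m + dist m p₃ < dist p₁ p₂ + dist p₂ p₃ := by
  classical
  obtain ⟨hγ₁0, hγ₁d, hγ₁iso⟩ := hγ₁
  obtain ⟨hγ₃0, hγ₃d, hγ₃iso⟩ := hγ₃
  -- the diagonal limit of comparison angles
  have hdiag : Filter.Tendsto (fun ε : ℝ => ((ε : ℝ), (ε : ℝ)))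
      (nhdsWithin 0 (Set.Ioi 0))
      ((nhdsWithin 0 (Set.Ioi 0)) ×ˢ (nhdsWithin 0 (Set.Ioi 0))) :=
    Filter.Tendsto.prodMk Filter.tendsto_id Filter.tendsto_id
  have hg : Filter.Tendsto
      ((fun p : ℝ × ℝ => eucCompAngle p.1 p.2 (dist (γ₁ p.1) (γ₃ p.2))) ∘
        (fun ε : ℝ => ((ε : ℝ), (ε : ℝ))))
      (nhdsWithin 0 (Set.Ioi 0)) (nhds α) := hα.comp hdiag
  simp only [Function.comp_def] at hg
  have hα0 : 0 ≤ α := ge_of_tendsto' hg fun ε => Real.arccos_nonneg _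
  set β : ℝ := (α + π) / 2 with hβdef
  have hβπ : β < π := by rw [hβdef]; linarith
  have hβ0 : 0 < β := by rw [hβdef]; have := Real.pi_pos; linarith
  have hcosβ : -1 < Real.cos β := by
    have h := Real.cos_lt_cos_of_nonneg_of_le_pi hβ0.le le_rfl hβπ
    rwa [Real.cos_pi] at h
  set c : ℝ := Real.sqrt (2 * (1 - Real.cos β)) with hcdef
  have hc0 : 0 ≤ c := Real.sqrt_nonneg _
  have hcsq : c ^ 2 = 2 * (1 - Real.cos β) := by
    rw [hcdef, sq, Real.mul_self_sqrt (by nlinarith [Real.cos_le_one β])]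
  have hc2 : c < 2 := by
    nlinarith [hcsq, hc0]
  refine ⟨1 - c / 2, by linarith, ?_⟩
  have hev : ∀ᶠ ε in nhdsWithin 0 (Set.Ioi (0 : ℝ)),
      eucCompAngle ε ε (dist (γ₁ ε) (γ₃ ε)) < β :=
    hg.eventually_lt_const (by rw [hβdef]; linarith)
  obtain ⟨ε₁, hε₁, hsub⟩ := Metric.mem_nhdsWithin_iff.mp hev
  refine ⟨min ε₁ (min (dist p₂ p₁) (dist p₂ p₃)),
    lt_min hε₁ (lt_min h12 h23), ?_⟩
  intro ε hε hεε₀ m hm1 hm3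
  have hεd1 : ε ≤ dist p₂ p₁ :=
    (lt_of_lt_of_le hεε₀ ((min_le_right _ _).trans (min_le_left _ _))).le
  have hεd3 : ε ≤ dist p₂ p₃ :=
    (lt_of_lt_of_le hεε₀ ((min_le_right _ _).trans (min_le_right _ _))).le
  have hεε₁ : ε < ε₁ := lt_of_lt_of_le hεε₀ (min_le_left _ _)
  -- basic distances along the geodesics
  have d21 : dist p₂ (γ₁ ε) = ε := by
    have h := hγ₁iso 0 ⟨le_rfl, dist_nonneg⟩ ε ⟨hε.le, hεd1⟩
    rw [hγ₁0] at h
    rw [h]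
    rw [abs_of_nonpos (by linarith)]; ring
  have d23 : dist p₂ (γ₃ ε) = ε := by
    have h := hγ₃iso 0 ⟨le_rfl, dist_nonneg⟩ ε ⟨hε.le, hεd3⟩
    rw [hγ₃0] at h
    rw [h]
    rw [abs_of_nonpos (by linarith)]; ring
  have d11 : dist p₁ (γ₁ ε) = dist p₂ p₁ - ε := by
    have h := hγ₁iso (dist p₂ p₁) ⟨dist_nonneg, le_rfl⟩ ε ⟨hε.le, hεd1⟩
    rw [hγ₁d] at h
    rw [h, abs_of_nonneg (by linarith)]
  have d33 : dist p₃ (γ₃ ε) = dist p₂ p₃ - ε := by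
    have h := hγ₃iso (dist p₂ p₃) ⟨dist_nonneg, le_rfl⟩ ε ⟨hε.le, hεd3⟩
    rw [hγ₃d] at h
    rw [h, abs_of_nonneg (by linarith)]
  set d : ℝ := dist (γ₁ ε) (γ₃ ε) with hddef
  have hd0 : 0 ≤ d := dist_nonneg
  have hd2ε : d ≤ 2 * ε := by
    have := dist_triangle (γ₁ ε) p₂ (γ₃ ε)
    rw [dist_comm (γ₁ ε) p₂, d21, d23] at this
    linarith
  -- part 1: dist p₂ m ≤ 2ε
  have part1 : dist p₂ m ≤ 2 * ε := by
    have := dist_triangle p₂ (γ₁ ε) m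
    rw [d21, hm1] at this
    linarith
  -- the comparison-angle bound gives d ≤ c * ε
  have hθ : eucCompAngle ε ε d < β := by
    refine hsub ⟨?_, hε⟩
    simp only [Metric.mem_ball, Real.dist_eq, sub_zero, abs_of_pos hε]
    exact hεε₁
  have hεpos2 : (0 : ℝ) < 2 * ε * ε := by positivity
  have hx1 : -1 ≤ eucAngleCos d ε ε := by
    rw [eucAngleCos, le_div_iff₀ hεpos2]
    nlinarith [hd2ε, hd0]
  have hx2 : eucAngleCos d ε ε ≤ 1 := by
    rw [eucAngleCos, div_le_one hεpos2]
    nlinarith [hd0]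
  have hcosθ : Real.cos (eucCompAngle ε ε d) = eucAngleCos d ε ε :=
    Real.cos_arccos hx1 hx2
  have hcoscomp : Real.cos β ≤ Real.cos (eucCompAngle ε ε d) :=
    Real.cos_le_cos_of_nonneg_of_le_pi (Real.arccos_nonneg _) hβπ.le hθ.le
  have hxval : Real.cos β ≤ (ε ^ 2 + ε ^ 2 - d ^ 2) / (2 * ε * ε) := by
    rw [hcosθ, eucAngleCos] at hcoscomp
    exact hcoscomp
  have hdsq : d ^ 2 ≤ c ^ 2 * ε ^ 2 := by
    rw [le_div_iff₀ hεpos2] at hxval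
    rw [hcsq]
    nlinarith [hxval]
  have hdcε : d ≤ c * ε := by
    nlinarith [hd0, mul_nonneg hc0 hε.le, hdsq]
  -- part 2 and 3
  have part2 : dist p₁ m ≤ dist p₁ p₂ - (1 - c / 2) * ε := by
    have h := dist_triangle p₁ (γ₁ ε) m
    rw [d11, hm1] at h
    have e : dist p₁ p₂ = dist p₂ p₁ := dist_comm _ _
    linarith
  have part3 : dist p₃ m ≤ dist p₃ p₂ - (1 - c / 2) * ε := by
    have h := dist_triangle p₃ (γ₃ ε) m
    rw [d33] at h
    have e1 : dist (γ₃ ε) m = d / 2 := by rw [dist_comm]; exact hm3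
    have e2 : dist p₃ p₂ = dist p₂ p₃ := dist_comm _ _
    linarith
  refine ⟨part1, part2, part3, ?_⟩
  have hδε : 0 < (1 - c / 2) * ε := mul_pos (by linarith) hε
  have e3 : dist m p₃ = dist p₃ m := dist_comm _ _
  have e4 : dist p₂ p₃ = dist p₃ p₂ := dist_comm _ _
  linarith


end DomCAT
end
end

section
/- Fix a > 0. For ε > 0, let α(ε) denote the (two equal) base angles and β(ε) the apex angle of the hyperbolic triangle with side lengths (a+ε, a+ε, ε), where β(ε) is the angle opposite the side of length ε. Then α(ε) → π/2 and β(ε) → 0 as ε → 0⁺; in particular the total angle α(ε) + α(ε) + β(ε) tends to π. -/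
open Real Set

noncomputable section

namespace DomCAT

open Filter Topology in
private lemma baseCos_tendsto (a : ℝ) (ha : 0 < a) :
    Tendsto (fun ε => (Real.cosh ε * Real.cosh (a+ε) - Real.cosh (a+ε)) /
      (Real.sinh ε * Real.sinh (a+ε))) (nhdsWithin 0 (Set.Ioi 0)) (nhds 0) := by
  have hsa : Real.sinh a ≠ 0 := ne_of_gt (Real.sinh_pos_iff.2 ha)
  have hc : ContinuousAt (fun ε => Real.sinh ε / (Real.cosh ε + 1) *
      (Real.cosh (a+ε) / Real.sinh (a+ε))) 0 := by
    apply ContinuousAt.mul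
    · exact Real.continuous_sinh.continuousAt.div
        (Real.continuous_cosh.continuousAt.add continuousAt_const)
        (by positivity)
    · exact (Real.continuous_cosh.continuousAt.comp (by fun_prop)).div
        ((Real.continuous_sinh.continuousAt.comp (by fun_prop))) (by simpa using hsa)
  have h0 : Real.sinh 0 / (Real.cosh 0 + 1) * (Real.cosh (a+0) / Real.sinh (a+0)) = 0 := by
    simp
  have h := hc.tendsto
  rw [h0] at h
  refine Tendsto.congr' ?_ (h.mono_left nhdsWithin_le_nhds)
  filter_upwards [self_mem_nhdsWithin] with ε (hε : 0 < ε)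
  have hs : Real.sinh ε ≠ 0 := ne_of_gt (Real.sinh_pos_iff.2 hε)
  have hS : Real.sinh (a+ε) ≠ 0 := ne_of_gt (Real.sinh_pos_iff.2 (by positivity))
  have hc1 : Real.cosh ε + 1 ≠ 0 := by positivity
  have hsq : Real.sinh ε ^ 2 = Real.cosh ε ^ 2 - 1 := Real.sinh_sq ε
  field_simp
  linear_combination hsq

open Filter Topology in
private lemma apexCos_tendsto (a : ℝ) (ha : 0 < a) :
    Tendsto (fun ε => (Real.cosh (a+ε) * Real.cosh (a+ε) - Real.cosh ε) /
      (Real.sinh (a+ε) * Real.sinh (a+ε))) (nhdsWithin 0 (Set.Ioi 0)) (nhds 1) := by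
  have hsa : Real.sinh a ≠ 0 := ne_of_gt (Real.sinh_pos_iff.2 ha)
  have hc : ContinuousAt (fun ε => (Real.cosh (a+ε) * Real.cosh (a+ε) - Real.cosh ε) /
      (Real.sinh (a+ε) * Real.sinh (a+ε))) 0 := by
    apply ContinuousAt.div (by fun_prop) (by fun_prop)
    simpa using mul_ne_zero hsa hsa
  have h0 : (Real.cosh (a+0) * Real.cosh (a+0) - Real.cosh 0) /
      (Real.sinh (a+0) * Real.sinh (a+0)) = 1 := by
    rw [add_zero, Real.cosh_zero]
    rw [div_eq_one_iff_eq (mul_ne_zero hsa hsa)]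
    nlinarith [Real.sinh_sq a]
  have h := hc.tendsto
  rw [h0] at h
  exact h.mono_left nhdsWithin_le_nhds

/-- The base angles of the hyperbolic triangle with side lengths
`(a+ε, a+ε, ε)` tend to `π/2` and its apex angle tends to `0` as `ε → 0⁺`; in particular
its total angle tends to `π`. -/
theorem statement_15 (a : ℝ) (ha : 0 < a) :
    Filter.Tendsto (baseAngle a) (nhdsWithin 0 (Set.Ioi 0)) (nhds (π / 2)) ∧
    Filter.Tendsto (apexAngle a) (nhdsWithin 0 (Set.Ioi 0)) (nhds 0) ∧
    Filter.Tendsto (fun ε => baseAngle a ε + baseAngle a ε + apexAngle a ε)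
      (nhdsWithin 0 (Set.Ioi 0)) (nhds π) := by
  have hb : Filter.Tendsto (baseAngle a) (nhdsWithin 0 (Set.Ioi 0)) (nhds (π / 2)) := by
    have := (Real.continuous_arccos.continuousAt (x := (0:ℝ))).tendsto.comp
      (baseCos_tendsto a ha)
    rw [Real.arccos_zero] at this
    exact this
  have hap : Filter.Tendsto (apexAngle a) (nhdsWithin 0 (Set.Ioi 0)) (nhds 0) := by
    have := (Real.continuous_arccos.continuousAt (x := (1:ℝ))).tendsto.comp
      (apexCos_tendsto a ha)
    rw [Real.arccos_one] at this
    exact this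
  refine ⟨hb, hap, ?_⟩
  have h := (hb.add hb).add hap
  norm_num at h
  convert h using 2

end DomCAT
end
end
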